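/- arXiv:2001.10839 — 4 statements merged into one kernel-verified Lean document; each statement's English description precedes it below -/
import Mathlib

section
/- Let k = p^a q^b l with gcd(l, pq) = 1, 0 ≤ a ≤ m−1, 0 ≤ b ≤ n−1, and set ζ_q = β^{p^{m+a} q^{n−1}} (a primitive q-th root of unity). Then for all 1 ≤ j ≤ n: S_1^{(0,j)}(β^k) = q^{j−1}(q−1)/2 (as an element of F_{4^{d*}}) if j ≤ b; S_1^{(0,j)}(β^k) = Σ_{t ∈ D_1^{(q)}} ζ_q^{lt} if j = b+1; and S_1^{(0,j)}(β^k) = 0 if j > b+1. -/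
open Finset Polynomial

noncomputable section

/-- The field `F₄` with four elements. -/
abbrev F4 : Type := GaloisField 2 2

/-- Generic generalized cyclotomic class of index `0` modulo `M`:
`{ g^(2t) * y^k mod M : 0 ≤ t < dHalf, 0 ≤ k < e }`. -/
def GC0 (g y M dHalf e : ℕ) : Finset ℕ :=
  ((Finset.range dHalf) ×ˢ (Finset.range e)).image
    (fun tk => g ^ (2 * tk.1) * y ^ tk.2 % M)

/-- Generic generalized cyclotomic class of index `1` modulo `M`: `g · GC0 (mod M)`. -/
def GC1 (g y M dHalf e : ℕ) : Finset ℕ :=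
  (GC0 g y M dHalf e).image (fun x => g * x % M)

/-- Class of index `h ∈ {0,1}`. -/
def GC (h g y M dHalf e : ℕ) : Finset ℕ :=
  if h = 0 then GC0 g y M dHalf e else GC1 g y M dHalf e

/-- `e_{i,j} = gcd(p^{i-1}(p-1), q^{j-1}(q-1))`. -/
def eij (p q i j : ℕ) : ℕ := Nat.gcd (p ^ (i - 1) * (p - 1)) (q ^ (j - 1) * (q - 1))

/-- `d_{i,j} = p^{i-1}(p-1) q^{j-1}(q-1) / e_{i,j}`. -/
def dij (p q i j : ℕ) : ℕ := p ^ (i - 1) * (p - 1) * (q ^ (j - 1) * (q - 1)) / eij p q i j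

/-- `D_h^{(p^i q^j)}`. -/
def DPQ (p q g y h i j : ℕ) : Finset ℕ :=
  GC h g y (p ^ i * q ^ j) (dij p q i j / 2) (eij p q i j)

/-- `D_h^{(2 p^i q^j)}`. -/
def D2PQ (p q g y h i j : ℕ) : Finset ℕ :=
  GC h g y (2 * (p ^ i * q ^ j)) (dij p q i j / 2) (eij p q i j)

/-- `D_h^{(p^i)}`. -/
def DP (p g h i : ℕ) : Finset ℕ := GC h g 1 (p ^ i) (p ^ (i - 1) * (p - 1) / 2) 1

/-- `D_h^{(2p^i)}`. -/
def D2P (p g h i : ℕ) : Finset ℕ := GC h g 1 (2 * p ^ i) (p ^ (i - 1) * (p - 1) / 2) 1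

/-- `D_h^{(q^j)}`. -/
def DQ (q g h j : ℕ) : Finset ℕ := GC h g 1 (q ^ j) (q ^ (j - 1) * (q - 1) / 2) 1

/-- `D_h^{(2q^j)}`. -/
def D2Q (q g h j : ℕ) : Finset ℕ := GC h g 1 (2 * q ^ j) (q ^ (j - 1) * (q - 1) / 2) 1

/-- `c · A`. -/
def scaled (c : ℕ) (A : Finset ℕ) : Finset ℕ := A.image (fun x => c * x)

/-- `H_h^{(p^i q^j)} = p^{m-i} q^{n-j} D_h^{(p^i q^j)}`. -/
def HPQ (p q m n g y h i j : ℕ) : Finset ℕ :=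
  scaled (p ^ (m - i) * q ^ (n - j)) (DPQ p q g y h i j)

/-- `H_h^{(2 p^i q^j)} = p^{m-i} q^{n-j} D_h^{(2 p^i q^j)}`. -/
def H2PQ (p q m n g y h i j : ℕ) : Finset ℕ :=
  scaled (p ^ (m - i) * q ^ (n - j)) (D2PQ p q g y h i j)

/-- `H_h^{(p^i)} = p^{m-i} q^n D_h^{(p^i)}`. -/
def HP (p q m n g h i : ℕ) : Finset ℕ := scaled (p ^ (m - i) * q ^ n) (DP p g h i)

/-- `H_h^{(2p^i)} = p^{m-i} q^n D_h^{(2p^i)}`. -/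
def H2P (p q m n g h i : ℕ) : Finset ℕ := scaled (p ^ (m - i) * q ^ n) (D2P p g h i)

/-- `H_h^{(q^j)} = p^m q^{n-j} D_h^{(q^j)}`. -/
def HQ (p q m n g h j : ℕ) : Finset ℕ := scaled (p ^ m * q ^ (n - j)) (DQ q g h j)

/-- `H_h^{(2q^j)} = p^m q^{n-j} D_h^{(2q^j)}`. -/
def H2Q (p q m n g h j : ℕ) : Finset ℕ := scaled (p ^ m * q ^ (n - j)) (D2Q q g h j)

/-- `⋃_{i,j} H_h^{(2p^i q^j)} ∪ ⋃_i H_h^{(2p^i)} ∪ ⋃_j H_h^{(2q^j)}`. -/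
def UnionH (p q m n g y h : ℕ) : Finset ℕ :=
  ((Finset.Icc 1 m).biUnion fun i => (Finset.Icc 1 n).biUnion fun j => H2PQ p q m n g y h i j)
    ∪ ((Finset.Icc 1 m).biUnion fun i => H2P p q m n g h i)
    ∪ ((Finset.Icc 1 n).biUnion fun j => H2Q p q m n g h j)

/-- `⋃_{i,j} 2H_h^{(p^i q^j)} ∪ ⋃_i 2H_h^{(p^i)} ∪ ⋃_j 2H_h^{(q^j)}`. -/
def Union2H (p q m n g y h : ℕ) : Finset ℕ :=
  ((Finset.Icc 1 m).biUnion fun i =>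
      (Finset.Icc 1 n).biUnion fun j => scaled 2 (HPQ p q m n g y h i j))
    ∪ ((Finset.Icc 1 m).biUnion fun i => scaled 2 (HP p q m n g h i))
    ∪ ((Finset.Icc 1 n).biUnion fun j => scaled 2 (HQ p q m n g h j))

section Helpers

private lemma pow_congr_mod {K : Type*} [Monoid K] (x : K) {M a b : ℕ} (hx : x ^ M = 1)
    (h : a ≡ b [MOD M]) : x ^ a = x ^ b := by
  have key : ∀ c : ℕ, x ^ c = x ^ (c % M) := fun c => by
    conv_lhs => rw [← Nat.div_add_mod c M]
    rw [pow_add, pow_mul, hx, one_pow, one_mul]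
  rw [key a, key b]
  unfold Nat.ModEq at h
  rw [h]

private lemma sum_blocks {K : Type*} [AddCommMonoid K] (f : ℕ → K) (P : ℕ) :
    ∀ k, ∑ t ∈ Finset.range (k * P), f t
      = ∑ c ∈ Finset.range k, ∑ s ∈ Finset.range P, f (c * P + s)
  | 0 => by simp
  | (k + 1) => by
    rw [Finset.sum_range_succ, ← sum_blocks f P k, add_mul, one_mul, Finset.sum_range_add]

private lemma sum_periodic {K : Type*} [AddCommMonoid K] (f : ℕ → K) (P k : ℕ)
    (hf : ∀ t, f (t + P) = f t) :
    ∑ t ∈ Finset.range (k * P), f t = k • ∑ s ∈ Finset.range P, f s := by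
  rw [sum_blocks]
  have hconst : ∀ c s : ℕ, f (c * P + s) = f s := by
    intro c
    induction c with
    | zero => simp
    | succ c ih =>
      intro s
      have h1 : (c + 1) * P + s = c * P + s + P := by ring
      rw [h1, hf, ih]
  calc ∑ c ∈ Finset.range k, ∑ s ∈ Finset.range P, f (c * P + s)
      = ∑ c ∈ Finset.range k, ∑ s ∈ Finset.range P, f s := by
        refine Finset.sum_congr rfl fun c _ => Finset.sum_congr rfl fun s _ => hconst c s
    _ = k • ∑ s ∈ Finset.range P, f s := by
        rw [Finset.sum_const, Finset.card_range]

private lemma geom_zero {K : Type*} [Field K] {x : K} (hx : x ≠ 1) {Q : ℕ} (hxQ : x ^ Q = 1) :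
    ∑ c ∈ Finset.range Q, x ^ c = 0 := by
  rw [geom_sum_eq hx, hxQ, sub_self, zero_div]

private lemma gpow_modEq_one {g M e : ℕ} (h : ((g : ℕ) : ZMod M) ^ e = 1) :
    g ^ e ≡ 1 [MOD M] := by
  have := (ZMod.natCast_eq_natCast_iff (g ^ e) 1 M).mp (by push_cast; simpa using h)
  exact this

private lemma GC1_eq (g M N : ℕ) :
    GC 1 g 1 M N 1 = (Finset.range N).image (fun t => g ^ (2 * t + 1) % M) := by
  have h0 : GC0 g 1 M N 1 = (Finset.range N).image (fun t => g ^ (2 * t) % M) := by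
    ext x
    simp only [GC0, Finset.mem_image, Finset.mem_product, Finset.mem_range, Prod.exists,
      Nat.lt_one_iff, one_pow, mul_one]
    constructor
    · rintro ⟨t, k, ⟨ht, rfl⟩, rfl⟩; exact ⟨t, ht, rfl⟩
    · rintro ⟨t, ht, rfl⟩; exact ⟨t, 0, ⟨ht, rfl⟩, rfl⟩
  have hGC : GC 1 g 1 M N 1 = GC1 g 1 M N 1 := by simp [GC]
  rw [hGC]
  unfold GC1
  rw [h0, Finset.image_image]
  refine Finset.image_congr fun t _ => ?_
  show g * (g ^ (2 * t) % M) % M = g ^ (2 * t + 1) % M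
  conv_lhs => rw [Nat.mul_mod, Nat.mod_mod_of_dvd _ dvd_rfl, ← Nat.mul_mod]
  rw [pow_succ, mul_comm]

private lemma inj_gpow {g M N : ℕ} (hN : 0 < N)
    (hord : orderOf ((g : ℕ) : ZMod M) = 2 * N) :
    Set.InjOn (fun t => g ^ (2 * t + 1) % M) (Finset.range N) := by
  have hfin : IsOfFinOrder ((g : ℕ) : ZMod M) := by
    rw [← orderOf_pos_iff, hord]; omega
  have hu : IsUnit ((g : ℕ) : ZMod M) := hfin.isUnit
  intro t ht t' ht' h
  simp only [Finset.coe_range, Set.mem_Iio] at ht ht'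
  have hmod : g ^ (2 * t + 1) ≡ g ^ (2 * t' + 1) [MOD M] := h
  have hz : ((g : ℕ) : ZMod M) ^ (2 * t + 1) = ((g : ℕ) : ZMod M) ^ (2 * t' + 1) := by
    have := (ZMod.natCast_eq_natCast_iff _ _ _).mpr hmod
    push_cast at this
    exact this
  have huz : hu.unit ^ (2 * t + 1) = hu.unit ^ (2 * t' + 1) := by
    apply Units.ext
    push_cast [hu.unit_spec]
    exact_mod_cast hz
  have hmm : (2 * t + 1) ≡ (2 * t' + 1) [MOD orderOf hu.unit] :=
    pow_eq_pow_iff_modEq.mp huz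
  have hou : orderOf hu.unit = 2 * N := by
    rw [← orderOf_units, hu.unit_spec, hord]
  rw [hou] at hmm
  unfold Nat.ModEq at hmm
  rw [Nat.mod_eq_of_lt (by omega), Nat.mod_eq_of_lt (by omega)] at hmm
  omega

private lemma sum_GC1 {K : Type*} [AddCommMonoid K] (f : ℕ → K) (g M N : ℕ) (hN : 0 < N)
    (hord : orderOf ((g : ℕ) : ZMod M) = 2 * N) :
    ∑ t ∈ GC 1 g 1 M N 1, f t = ∑ t ∈ Finset.range N, f (g ^ (2 * t + 1) % M) := by
  rw [GC1_eq, Finset.sum_image (fun a ha b hb hab =>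
    inj_gpow hN hord (Finset.mem_coe.mpr ha) (Finset.mem_coe.mpr hb) hab)]

private lemma sum_scaled {K : Type*} [AddCommMonoid K] (f : ℕ → K) (c : ℕ) (hc : 0 < c)
    (A : Finset ℕ) : ∑ t ∈ scaled c A, f t = ∑ t ∈ A, f (c * t) := by
  unfold scaled
  rw [Finset.sum_image (fun a _ b _ hab => Nat.eq_of_mul_eq_mul_left hc hab)]

private lemma branch3 {K : Type*} [Field K] {q g r b₀ P₀ : ℕ} {ω : K}
    (hq : q.Prime) (hq2P : q - 1 = 2 * P₀)
    (hr2 : 2 ≤ r) (hω : IsPrimitiveRoot ω (q ^ r))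
    (hordr : orderOf ((g : ℕ) : ZMod (q ^ r)) = Nat.totient (q ^ r))
    (hordr1 : orderOf ((g : ℕ) : ZMod (q ^ (r - 1))) = Nat.totient (q ^ (r - 1)))
    (hgpos : 0 < g) (hqng : ¬ q ∣ g) (hqb : ¬ q ∣ b₀) (E : ℕ) :
    ∑ t ∈ Finset.range (E * (q ^ (r - 1) * P₀)), ω ^ (b₀ * g ^ (2 * t + 1)) = 0 := by
  have hq1 : 1 < q := hq.one_lt
  have hP₀pos : 0 < P₀ := by omega
  have hωpow : ω ^ (q ^ r) = 1 := hω.pow_eq_one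
  have htr : Nat.totient (q ^ r) = q ^ (r - 1) * (q - 1) := Nat.totient_prime_pow hq (by omega)
  have htr1 : Nat.totient (q ^ (r - 1)) = q ^ (r - 2) * (q - 1) := by
    rw [Nat.totient_prime_pow hq (by omega)]
    rfl
  have hgP : g ^ (2 * (q ^ (r - 1) * P₀)) ≡ 1 [MOD q ^ r] := by
    apply gpow_modEq_one
    apply orderOf_dvd_iff_pow_eq_one.mp
    rw [hordr, htr]
    exact dvd_of_eq (by rw [hq2P]; ring)
  have hper : ∀ t, ω ^ (b₀ * g ^ (2 * (t + q ^ (r - 1) * P₀) + 1)) = ω ^ (b₀ * g ^ (2 * t + 1)) := by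
    intro t
    apply pow_congr_mod ω hωpow
    have he : 2 * (t + q ^ (r - 1) * P₀) + 1 = (2 * t + 1) + 2 * (q ^ (r - 1) * P₀) := by ring
    rw [he, pow_add]
    have h4 : g ^ (2 * t + 1) * g ^ (2 * (q ^ (r - 1) * P₀)) ≡ g ^ (2 * t + 1) * 1 [MOD q ^ r] :=
      hgP.mul_left _
    rw [mul_one] at h4
    exact h4.mul_left b₀
  rw [sum_periodic _ _ E hper]
  suffices hinner : ∑ t ∈ Finset.range (q ^ (r - 1) * P₀), ω ^ (b₀ * g ^ (2 * t + 1)) = 0 by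
    rw [hinner, smul_zero]
  have hθ1 : g ^ (2 * (q ^ (r - 2) * P₀)) ≡ 1 [MOD q ^ (r - 1)] := by
    apply gpow_modEq_one
    apply orderOf_dvd_iff_pow_eq_one.mp
    rw [hordr1, htr1]
    exact dvd_of_eq (by rw [hq2P]; ring)
  have hθge1 : 1 ≤ g ^ (2 * (q ^ (r - 2) * P₀)) := Nat.one_le_pow _ _ hgpos
  have hqr : q ^ (r - 1) * q = q ^ r := by rw [← pow_succ]; congr 1; omega
  obtain ⟨u, hu⟩ := (Nat.modEq_iff_dvd' hθge1).mp hθ1.symm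
  have hθu : g ^ (2 * (q ^ (r - 2) * P₀)) = 1 + u * q ^ (r - 1) := by
    rw [mul_comm u (q ^ (r - 1))]; omega
  have hqu : ¬ q ∣ u := by
    intro hdvd
    obtain ⟨v, rfl⟩ := hdvd
    have hd2 : q ^ r ∣ g ^ (2 * (q ^ (r - 2) * P₀)) - 1 := by
      rw [hu, show q ^ (r - 1) * (q * v) = q ^ r * v by rw [← hqr]; ring]
      exact Dvd.intro v rfl
    have h7 : ((g : ℕ) : ZMod (q ^ r)) ^ (2 * (q ^ (r - 2) * P₀)) = 1 := by
      have hme : (1 : ℕ) ≡ g ^ (2 * (q ^ (r - 2) * P₀)) [MOD q ^ r] :=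
        (Nat.modEq_iff_dvd' hθge1).mpr hd2
      have := (ZMod.natCast_eq_natCast_iff _ _ _).mpr hme.symm
      push_cast at this
      exact this
    have h8 : orderOf ((g : ℕ) : ZMod (q ^ r)) ∣ 2 * (q ^ (r - 2) * P₀) :=
      orderOf_dvd_of_pow_eq_one h7
    rw [hordr, htr] at h8
    have h9 := Nat.le_of_dvd (by positivity) h8
    rw [show 2 * (q ^ (r - 2) * P₀) = q ^ (r - 2) * (q - 1) by rw [hq2P]; ring] at h9
    have hlt : q ^ (r - 2) < q ^ (r - 1) := pow_lt_pow_right₀ hq1 (by omega)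
    have := Nat.le_of_mul_le_mul_right h9 (by omega : 0 < q - 1)
    omega
  have hθpow : ∀ c : ℕ,
      (g ^ (2 * (q ^ (r - 2) * P₀))) ^ c ≡ 1 + c * u * q ^ (r - 1) [MOD q ^ r] := by
    intro c
    induction c with
    | zero => simpa using Nat.ModEq.refl 1
    | succ c ih =>
      have hQ2 : q ^ r ∣ (c * u * u) * (q ^ (r - 1) * q ^ (r - 1)) := by
        refine Dvd.dvd.mul_left ?_ _
        rw [← pow_add]
        exact pow_dvd_pow q (by omega)
      calc (g ^ (2 * (q ^ (r - 2) * P₀))) ^ (c + 1)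
          = (g ^ (2 * (q ^ (r - 2) * P₀))) ^ c * g ^ (2 * (q ^ (r - 2) * P₀)) := pow_succ _ _
        _ ≡ (1 + c * u * q ^ (r - 1)) * (1 + u * q ^ (r - 1)) [MOD q ^ r] := by
            refine Nat.ModEq.mul ih ?_
            rw [hθu]
        _ = (1 + (c + 1) * u * q ^ (r - 1)) + (c * u * u) * (q ^ (r - 1) * q ^ (r - 1)) := by ring
        _ ≡ (1 + (c + 1) * u * q ^ (r - 1)) + 0 [MOD q ^ r] :=
            Nat.ModEq.add_left _ (Nat.modEq_zero_iff_dvd.mpr hQ2)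
        _ = 1 + (c + 1) * u * q ^ (r - 1) := by ring
  rw [show q ^ (r - 1) * P₀ = q * (q ^ (r - 2) * P₀) by
      rw [show r - 1 = (r - 2) + 1 by omega, pow_succ]; ring,
    sum_blocks, Finset.sum_comm]
  apply Finset.sum_eq_zero
  intro s _
  have hterm3 : ∀ c, ω ^ (b₀ * g ^ (2 * (c * (q ^ (r - 2) * P₀) + s) + 1))
      = ω ^ (b₀ * g ^ (2 * s + 1)) * (ω ^ (b₀ * g ^ (2 * s + 1) * u * q ^ (r - 1))) ^ c := by
    intro c
    have hexp : 2 * (c * (q ^ (r - 2) * P₀) + s) + 1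
        = (2 * s + 1) + (2 * (q ^ (r - 2) * P₀)) * c := by ring
    rw [hexp, pow_add g, pow_mul g]
    have hmod : b₀ * (g ^ (2 * s + 1) * (g ^ (2 * (q ^ (r - 2) * P₀))) ^ c)
        ≡ (b₀ * g ^ (2 * s + 1)) + (b₀ * g ^ (2 * s + 1) * u * q ^ (r - 1)) * c [MOD q ^ r] := by
      calc b₀ * (g ^ (2 * s + 1) * (g ^ (2 * (q ^ (r - 2) * P₀))) ^ c)
          = (b₀ * g ^ (2 * s + 1)) * (g ^ (2 * (q ^ (r - 2) * P₀))) ^ c := by ring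
        _ ≡ (b₀ * g ^ (2 * s + 1)) * (1 + c * u * q ^ (r - 1)) [MOD q ^ r] :=
            (hθpow c).mul_left _
        _ = (b₀ * g ^ (2 * s + 1)) + (b₀ * g ^ (2 * s + 1) * u * q ^ (r - 1)) * c := by ring
    rw [pow_congr_mod ω hωpow hmod, pow_add,
      pow_mul ω (b₀ * g ^ (2 * s + 1) * u * q ^ (r - 1)) c]
  rw [Finset.sum_congr rfl (fun c _ => hterm3 c), ← Finset.mul_sum]
  have hxq : (ω ^ (b₀ * g ^ (2 * s + 1) * u * q ^ (r - 1))) ^ q = 1 := by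
    rw [← pow_mul]
    refine (hω.pow_eq_one_iff_dvd _).mpr ?_
    exact ⟨b₀ * g ^ (2 * s + 1) * u, by rw [← hqr]; ring⟩
  have hx1 : ω ^ (b₀ * g ^ (2 * s + 1) * u * q ^ (r - 1)) ≠ 1 := by
    intro h
    have hdvd := (hω.pow_eq_one_iff_dvd _).mp h
    rw [← hqr] at hdvd
    have hdvd2 : q ^ (r - 1) * q ∣ q ^ (r - 1) * (b₀ * g ^ (2 * s + 1) * u) := by
      rw [show q ^ (r - 1) * (b₀ * g ^ (2 * s + 1) * u)
        = b₀ * g ^ (2 * s + 1) * u * q ^ (r - 1) by ring]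
      exact hdvd
    have hq' : q ∣ b₀ * g ^ (2 * s + 1) * u :=
      (Nat.mul_dvd_mul_iff_left (pow_pos hq.pos (r - 1))).mp hdvd2
    rcases (Nat.Prime.dvd_mul hq).mp hq' with h | h
    · rcases (Nat.Prime.dvd_mul hq).mp h with h' | h'
      · exact hqb h'
      · exact hqng (hq.dvd_of_dvd_pow h')
    · exact hqu h
  rw [geom_zero hx1 hxq, mul_zero]

end Helpers


/-- The quaternary generalized cyclotomic sequence of period `2 p^m q^n`. -/
def seqS (p q m n g y : ℕ) (a b c d e : F4) (u : ℕ) : F4 :=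
  let v := u % (2 * (p ^ m * q ^ n))
  if v = 0 then 0
  else if v = p ^ m * q ^ n then e
  else if v ∈ UnionH p q m n g y 0 then a
  else if v ∈ UnionH p q m n g y 1 then b
  else if v ∈ Union2H p q m n g y 0 then c
  else if v ∈ Union2H p q m n g y 1 then d
  else 0

/-- The generating polynomial `S(x) = ∑_{u=0}^{2p^m q^n - 1} s_u x^u ∈ F₄[x]`. -/
def genPoly (p q m n g y : ℕ) (a b c d e : F4) : Polynomial F4 :=
  ∑ u ∈ Finset.range (2 * (p ^ m * q ^ n)),
    Polynomial.C (seqS p q m n g y a b c d e u) * Polynomial.X ^ u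

/-- The linear complexity of a sequence over a field: the least `L > 0` admitting a linear
recurrence `s_{u+L} = c_1 s_{u+L-1} + ⋯ + c_L s_u`. -/
def LinearComplexity {F : Type*} [Field F] (s : ℕ → F) : ℕ :=
  sInf {L | 0 < L ∧ ∃ c : Fin L → F,
    ∀ u, s (u + L) = ∑ i : Fin L, c i * s (u + L - 1 - (i : ℕ))}

theorem statement9
    (p q m n g y : ℕ)
    (hp : p.Prime) (hq : q.Prime) (hpq : p ≠ q) (hpodd : Odd p) (hqodd : Odd q)
    (hm : 1 ≤ m) (hn : 1 ≤ n) (hgodd : Odd g)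
    (hgp : ∀ i, 1 ≤ i → i ≤ m → orderOf (g : ZMod (p ^ i)) = Nat.totient (p ^ i))
    (hg2p : ∀ i, 1 ≤ i → i ≤ m → orderOf (g : ZMod (2 * p ^ i)) = Nat.totient (2 * p ^ i))
    (hgq : ∀ j, 1 ≤ j → j ≤ n → orderOf (g : ZMod (q ^ j)) = Nat.totient (q ^ j))
    (hg2q : ∀ j, 1 ≤ j → j ≤ n → orderOf (g : ZMod (2 * q ^ j)) = Nat.totient (2 * q ^ j))
    (hylt : y < 2 * (p ^ m * q ^ n))
    (hyg : y ≡ g [MOD 2 * p ^ m]) (hy1 : y ≡ 1 [MOD 2 * q ^ n])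
    (K : Type*) [Field K] [Fintype K]
    (hK : Fintype.card K = 4 ^ orderOf (4 : ZMod (p ^ m * q ^ n)))
    (β : K) (hβ : IsPrimitiveRoot β (p ^ m * q ^ n))
    (A B l : ℕ) (hA : A ≤ m - 1) (hB : B ≤ n - 1) (hl : Nat.gcd l (p * q) = 1)
    : ∀ j, 1 ≤ j → j ≤ n →
      ((j ≤ B →
          ∑ t ∈ H2Q p q m n g 1 j, (β ^ (p ^ A * q ^ B * l)) ^ t
            = ((q ^ (j - 1) * (q - 1) / 2 : ℕ) : K)) ∧
        (j = B + 1 →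
          ∑ t ∈ H2Q p q m n g 1 j, (β ^ (p ^ A * q ^ B * l)) ^ t
            = ∑ t ∈ DQ q g 1 1, (β ^ (p ^ (m + A) * q ^ (n - 1))) ^ (l * t)) ∧
        (B + 1 < j →
          ∑ t ∈ H2Q p q m n g 1 j, (β ^ (p ^ A * q ^ B * l)) ^ t = 0)) := by
  classical
  have h2K : (2 : K) = 0 := by
    have hd : orderOf (4 : ZMod (p ^ m * q ^ n)) ≠ 0 := by
      intro h0
      have h1 : Fintype.card K = 1 := by rw [hK, h0, pow_zero]
      have h2 := Fintype.one_lt_card (α := K)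
      omega
    have hcard : Fintype.card K % 2 = 0 := by
      have hdvd : (2 : ℕ) ∣ Fintype.card K := by
        rw [hK, show (4 : ℕ) = 2 ^ 2 by norm_num, ← pow_mul]
        exact dvd_pow_self 2 (by omega)
      omega
    have hrc : ringChar K = 2 := FiniteField.even_card_iff_char_two.mpr hcard
    have h5 : ((2 : ℕ) : K) = 0 := (ringChar.spec K 2).mpr (by rw [hrc])
    exact_mod_cast h5
  have hq1 : 1 < q := hq.one_lt
  have hqmod2 : q % 2 = 1 := Nat.odd_iff.mp hqodd
  have hq3 : 3 ≤ q := by omega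
  have hgpos : 0 < g := by rcases hgodd with ⟨s, rfl⟩; omega
  have hq2P : q - 1 = 2 * ((q - 1) / 2) := by omega
  have hP₀pos : 0 < (q - 1) / 2 := by omega
  have hordq : orderOf ((g : ℕ) : ZMod q) = q - 1 := by
    have h := hgq 1 le_rfl hn
    rwa [pow_one, Nat.totient_prime hq] at h
  have hqng : ¬ q ∣ g := by
    intro hdvd
    haveI : Fact (1 < q) := ⟨hq1⟩
    have hz : ((g : ℕ) : ZMod q) = 0 := (ZMod.natCast_eq_zero_iff g q).mpr hdvd
    have h1 : ((g : ℕ) : ZMod q) ^ (q - 1) = 1 := by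
      rw [← hordq]; exact pow_orderOf_eq_one _
    rw [hz, zero_pow (by omega)] at h1
    exact zero_ne_one h1
  have hqnb : ¬ q ∣ p ^ A * l := by
    intro hdvd
    rcases (Nat.Prime.dvd_mul hq).mp hdvd with h | h
    · exact hpq (((Nat.prime_dvd_prime_iff_eq hq hp).mp (hq.dvd_of_dvd_pow h)).symm)
    · have h6 : q ∣ Nat.gcd l (p * q) := Nat.dvd_gcd h (dvd_mul_left q p)
      rw [hl] at h6
      have := Nat.le_of_dvd one_pos h6
      omega
  intro j hj1 hjn
  have hNsplit : q ^ (j - 1) * (q - 1) / 2 = q ^ (j - 1) * ((q - 1) / 2) := by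
    conv_lhs => rw [hq2P]
    rw [show q ^ (j - 1) * (2 * ((q - 1) / 2)) = 2 * (q ^ (j - 1) * ((q - 1) / 2)) by ring,
      Nat.mul_div_cancel_left _ (by norm_num)]
  have hNpos : 0 < q ^ (j - 1) * (q - 1) / 2 := by
    rw [hNsplit]
    exact Nat.mul_pos (pow_pos hq.pos _) hP₀pos
  have hordM : orderOf ((g : ℕ) : ZMod (2 * q ^ j)) = 2 * (q ^ (j - 1) * (q - 1) / 2) := by
    rw [hg2q j hj1 hjn, Nat.totient_mul (Nat.coprime_two_left.mpr hqodd.pow),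
      Nat.totient_two, one_mul, Nat.totient_prime_pow hq (by omega), hNsplit,
      show 2 * (q ^ (j - 1) * ((q - 1) / 2)) = q ^ (j - 1) * (2 * ((q - 1) / 2)) by ring,
      ← hq2P]
  have hcq : p ^ m * q ^ (n - j) * q ^ j = p ^ m * q ^ n := by
    rw [mul_assoc, ← pow_add, show n - j + j = n by omega]
  have hζpow : (β ^ (p ^ m * q ^ (n - j))) ^ (q ^ j) = 1 := by
    rw [← pow_mul, hcq, hβ.pow_eq_one]
  have hred : ∑ t ∈ H2Q p q m n g 1 j, (β ^ (p ^ A * q ^ B * l)) ^ t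
      = ∑ t ∈ Finset.range (q ^ (j - 1) * (q - 1) / 2),
          (β ^ (p ^ m * q ^ (n - j))) ^ (p ^ A * q ^ B * l * g ^ (2 * t + 1)) := by
    rw [show H2Q p q m n g 1 j
        = scaled (p ^ m * q ^ (n - j)) (GC 1 g 1 (2 * q ^ j) (q ^ (j - 1) * (q - 1) / 2) 1)
        from rfl]
    rw [sum_scaled _ _ (Nat.mul_pos (pow_pos hp.pos m) (pow_pos hq.pos _)) _,
      sum_GC1 _ g (2 * q ^ j) _ hNpos hordM]
    refine Finset.sum_congr rfl fun t _ => ?_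
    rw [← pow_mul, ← pow_mul]
    apply pow_congr_mod β hβ.pow_eq_one
    have h1 : g ^ (2 * t + 1) % (2 * q ^ j) ≡ g ^ (2 * t + 1) [MOD q ^ j] :=
      (Nat.mod_modEq _ _).of_dvd (dvd_mul_left _ 2)
    have h2 := h1.mul_left' (c := p ^ m * q ^ (n - j))
    rw [hcq] at h2
    have h3 := h2.mul_left (p ^ A * q ^ B * l)
    calc p ^ A * q ^ B * l * (p ^ m * q ^ (n - j) * (g ^ (2 * t + 1) % (2 * q ^ j)))
        ≡ p ^ A * q ^ B * l * (p ^ m * q ^ (n - j) * g ^ (2 * t + 1)) [MOD p ^ m * q ^ n] := h3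
      _ = p ^ m * q ^ (n - j) * (p ^ A * q ^ B * l * g ^ (2 * t + 1)) := by ring
  refine ⟨?_, ?_, ?_⟩
  · -- j ≤ B
    intro hjB
    rw [hred]
    obtain ⟨e, he⟩ : q ^ j ∣ q ^ B := pow_dvd_pow q hjB
    have hone : ∀ t ∈ Finset.range (q ^ (j - 1) * (q - 1) / 2),
        (β ^ (p ^ m * q ^ (n - j))) ^ (p ^ A * q ^ B * l * g ^ (2 * t + 1)) = 1 := by
      intro t _
      rw [show p ^ A * q ^ B * l * g ^ (2 * t + 1) = q ^ j * (p ^ A * e * l * g ^ (2 * t + 1))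
        by rw [he]; ring, pow_mul, hζpow, one_pow]
    rw [Finset.sum_congr rfl hone, Finset.sum_const, Finset.card_range, nsmul_eq_mul, mul_one]
  · -- j = B + 1
    intro hjB
    subst hjB
    rw [hred]
    have hη : (β ^ (p ^ m * q ^ (n - 1))) ^ q = 1 := by
      rw [← pow_mul, mul_assoc, ← pow_succ, show n - 1 + 1 = n by omega, hβ.pow_eq_one]
    have hterm2 : ∀ t : ℕ,
        (β ^ (p ^ m * q ^ (n - (B + 1)))) ^ (p ^ A * q ^ B * l * g ^ (2 * t + 1))
          = (β ^ (p ^ m * q ^ (n - 1))) ^ (p ^ A * l * g ^ (2 * t + 1)) := by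
      intro t
      rw [← pow_mul, ← pow_mul]
      congr 1
      rw [show p ^ m * q ^ (n - (B + 1)) * (p ^ A * q ^ B * l * g ^ (2 * t + 1))
          = p ^ m * (q ^ (n - (B + 1)) * q ^ B) * (p ^ A * l * g ^ (2 * t + 1)) by ring,
        ← pow_add, show n - (B + 1) + B = n - 1 by omega]
    rw [Finset.sum_congr rfl fun t _ => hterm2 t]
    have hgP₀ : g ^ (2 * ((q - 1) / 2)) ≡ 1 [MOD q] := by
      apply gpow_modEq_one
      rw [← hq2P, ← hordq]
      exact pow_orderOf_eq_one _
    have hper : ∀ t,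
        (β ^ (p ^ m * q ^ (n - 1))) ^ (p ^ A * l * g ^ (2 * (t + (q - 1) / 2) + 1))
          = (β ^ (p ^ m * q ^ (n - 1))) ^ (p ^ A * l * g ^ (2 * t + 1)) := by
      intro t
      apply pow_congr_mod _ hη
      rw [show 2 * (t + (q - 1) / 2) + 1 = (2 * t + 1) + 2 * ((q - 1) / 2) by ring, pow_add]
      have h4 : g ^ (2 * t + 1) * g ^ (2 * ((q - 1) / 2)) ≡ g ^ (2 * t + 1) * 1 [MOD q] :=
        hgP₀.mul_left _
      rw [mul_one] at h4
      exact h4.mul_left _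
    rw [hNsplit,
      sum_periodic (fun t => (β ^ (p ^ m * q ^ (n - 1))) ^ (p ^ A * l * g ^ (2 * t + 1)))
        ((q - 1) / 2) (q ^ (B + 1 - 1)) hper]
    obtain ⟨w, hw⟩ : Odd (q ^ (B + 1 - 1)) := hqodd.pow
    rw [nsmul_eq_mul, hw]
    push_cast
    rw [h2K, zero_mul, zero_add, one_mul]
    have hord1 : orderOf ((g : ℕ) : ZMod (q ^ 1)) = 2 * (q ^ (1 - 1) * (q - 1) / 2) := by
      rw [pow_one, hordq]
      simp only [Nat.sub_self, pow_zero, one_mul]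
      omega
    have hP₀pos' : 0 < q ^ (1 - 1) * (q - 1) / 2 := by
      simp only [Nat.sub_self, pow_zero, one_mul]
      exact hP₀pos
    have hRHS : ∑ t ∈ DQ q g 1 1, (β ^ (p ^ (m + A) * q ^ (n - 1))) ^ (l * t)
        = ∑ t ∈ Finset.range (q ^ (1 - 1) * (q - 1) / 2),
            (β ^ (p ^ (m + A) * q ^ (n - 1))) ^ (l * (g ^ (2 * t + 1) % q ^ 1)) := by
      rw [show DQ q g 1 1 = GC 1 g 1 (q ^ 1) (q ^ (1 - 1) * (q - 1) / 2) 1 from rfl]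
      exact sum_GC1 _ g (q ^ 1) _ hP₀pos' hord1
    rw [hRHS, show q ^ (1 - 1) * (q - 1) / 2 = (q - 1) / 2 by simp]
    refine Finset.sum_congr rfl fun t _ => ?_
    rw [← pow_mul, ← pow_mul]
    apply pow_congr_mod β hβ.pow_eq_one
    have h1 : (g ^ (2 * t + 1) % q ^ 1) ≡ g ^ (2 * t + 1) [MOD q] := by
      rw [pow_one]; exact Nat.mod_modEq _ _
    have h2 := (h1.mul_left (p ^ A * l)).mul_left' (c := p ^ m * q ^ (n - 1))
    rw [show p ^ m * q ^ (n - 1) * q = p ^ m * q ^ n by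
        rw [mul_assoc, ← pow_succ, show n - 1 + 1 = n by omega]] at h2
    calc p ^ m * q ^ (n - 1) * (p ^ A * l * g ^ (2 * t + 1))
        ≡ p ^ m * q ^ (n - 1) * (p ^ A * l * (g ^ (2 * t + 1) % q ^ 1))
            [MOD p ^ m * q ^ n] := h2.symm
      _ = p ^ (m + A) * q ^ (n - 1) * (l * (g ^ (2 * t + 1) % q ^ 1)) := by
          rw [pow_add]; ring
  · -- B + 1 < j
    intro hjB
    rw [hred]
    have hζprim : IsPrimitiveRoot (β ^ (p ^ m * q ^ (n - j))) (q ^ j) :=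
      hβ.pow (Nat.mul_pos (pow_pos hp.pos m) (pow_pos hq.pos n)) hcq.symm
    have hωprim : IsPrimitiveRoot ((β ^ (p ^ m * q ^ (n - j))) ^ (q ^ B)) (q ^ (j - B)) := by
      refine hζprim.pow (pow_pos hq.pos j) ?_
      rw [← pow_add, show B + (j - B) = j by omega]
    have hterm3 : ∀ t : ℕ,
        (β ^ (p ^ m * q ^ (n - j))) ^ (p ^ A * q ^ B * l * g ^ (2 * t + 1))
          = ((β ^ (p ^ m * q ^ (n - j))) ^ (q ^ B)) ^ (p ^ A * l * g ^ (2 * t + 1)) := by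
      intro t
      rw [← pow_mul, ← pow_mul, ← pow_mul]
      congr 1
      ring
    rw [Finset.sum_congr rfl fun t _ => hterm3 t,
      show q ^ (j - 1) * (q - 1) / 2 = q ^ B * (q ^ (j - B - 1) * ((q - 1) / 2)) by
        rw [hNsplit, ← mul_assoc, ← pow_add, show B + (j - B - 1) = j - 1 by omega]]
    exact branch3 hq hq2P (by omega) hωprim (hgq (j - B) (by omega) (by omega))
      (hgq (j - B - 1) (by omega) (by omega)) hgpos hqng hqnb (q ^ B)


end
end

section
/- Let S(x) = Σ_{u=0}^{2p^m q^n - 1} s_u x^u ∈ F_4[x] be the generating polynomial of the quaternary generalized cyclotomic sequence S. Then S(1) = e; in particular S(1) ≠ 0. -/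
open Finset Polynomial

noncomputable section

/-
Evaluating at `1` sums one period of `S`. Multiplication by `g` maps the odd class of index `0`
bijectively onto the odd class of index `1` (modulo `2p^m q^n`), and `u ↦ 2 (u mod p^m q^n)` maps
the odd class of index `h` bijectively onto the even class of index `h`. So the four classes on
which `S` takes the values `a, b, c, d` have a common size `k`, and `S(1) = e + k (a + b + c + d)`;
as `{a, b, c, d} = F₄`, whose elements sum to `0`, this is `e`.

The arithmetic input is that the two odd classes are disjoint. An element `u` of an odd class
determines its piece `p^(m-i) q^(n-j) D` through `gcd(u, p^m q^n) = p^(m-i) q^(n-j)`, and inside a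
piece the index is the parity of the exponent of `g` modulo `2q`, where `y ≡ 1` (modulo `2p` on
the pieces without `q`), because `g` has even order there.
-/

lemma pow_sub_mul_pow_mul_pow_sub_mul_pow {p q m n i j : ℕ} (hi : i ≤ m) (hj : j ≤ n) :
    p ^ (m - i) * q ^ (n - j) * (p ^ i * q ^ j) = p ^ m * q ^ n := by
  rw [← pow_sub_mul_pow p hi, ← pow_sub_mul_pow q hj]
  ring

lemma pow_mul_pow_inj {p q a b c d : ℕ} (hp : p.Prime) (hq : q.Prime) (hpq : p ≠ q)
    (h : p ^ a * q ^ b = p ^ c * q ^ d) : a = c ∧ b = d := by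
  have key : ∀ a b, (p ^ a * q ^ b).factorization p = a ∧ (p ^ a * q ^ b).factorization q = b :=
    fun a b => by
      simp [Nat.factorization_mul, hp.ne_zero, hq.ne_zero, hp.factorization_pow,
        hq.factorization_pow, hpq, hpq.symm]
  exact ⟨(key a b).1.symm.trans (h ▸ (key c d).1), (key a b).2.symm.trans (h ▸ (key c d).2)⟩

lemma Nat.Coprime.two_mul_pow_mul_pow {w p q : ℕ} (h : Nat.Coprime w (2 * (p * q))) (i j : ℕ) :
    Nat.Coprime w (2 * (p ^ i * q ^ j)) := by
  simp only [Nat.coprime_mul_iff_right] at h ⊢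
  exact ⟨h.1, h.2.1.pow_right i, h.2.2.pow_right j⟩

lemma Nat.Coprime.two_mul_mul {w p q : ℕ} (hp : Nat.Coprime w (2 * p))
    (hq : Nat.Coprime w (2 * q)) : Nat.Coprime w (2 * (p * q)) := by
  simp only [Nat.coprime_mul_iff_right] at hp hq ⊢
  exact ⟨hp.1, hp.2, hq.2⟩

lemma injOn_mul_mod {g N : ℕ} (hg : Nat.Coprime g N) :
    Set.InjOn (fun u => g * u % N) (Set.Iio N) := fun _ hu _ hv h =>
  (Nat.ModEq.cancel_left_of_coprime (Nat.coprime_comm.1 hg) h).eq_of_lt_of_lt hu hv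

lemma injOn_two_mul_mod {P : ℕ} (hP : Odd P) :
    Set.InjOn (fun u => 2 * (u % P)) {u | Odd u ∧ u < 2 * P} := by
  rintro u ⟨hu, hu2⟩ v ⟨hv, hv2⟩ h
  refine Nat.ModEq.eq_of_lt_of_lt ?_ hu2 hv2
  rw [← Nat.modEq_and_modEq_iff_modEq_mul (Nat.coprime_two_left.2 hP)]
  exact ⟨by simp [Nat.ModEq, Nat.odd_iff.1 hu, Nat.odd_iff.1 hv],
    Nat.eq_of_mul_eq_mul_left two_pos h⟩

lemma mod_ne_zero_of_odd_of_lt_two_mul {P u : ℕ} (hu : Odd u) (hlt : u < 2 * P)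
    (hne : u ≠ P) : u % P ≠ 0 := by
  intro h
  obtain ⟨k, rfl⟩ := Nat.dvd_of_mod_eq_zero h
  have hk : k < 2 := Nat.lt_of_mul_lt_mul_left (by linarith : P * k < P * 2)
  interval_cases k <;> simp_all

lemma isOfFinOrder_of_orderOf_eq_totient {r g : ℕ} (hr : 0 < r)
    (h : orderOf (g : ZMod r) = Nat.totient r) : IsOfFinOrder (g : ZMod r) :=
  orderOf_pos_iff.1 (h ▸ Nat.totient_pos.2 hr)

lemma coprime_of_orderOf_eq_totient {r g : ℕ} (hr : 0 < r)
    (h : orderOf (g : ZMod r) = Nat.totient r) : Nat.Coprime g r :=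
  (ZMod.isUnit_iff_coprime g r).1 (isOfFinOrder_of_orderOf_eq_totient hr h).isUnit

lemma pow_even_mul_mod_ne_pow_odd_mul_mod {g z z' M Q : ℕ} (hQM : Q ∣ M) (hQ : 2 < Q)
    (hg : orderOf (g : ZMod Q) = Nat.totient Q) (hz : z ≡ 1 [MOD Q]) (hz' : z' ≡ 1 [MOD Q])
    (t k t' k' : ℕ) : g ^ (2 * t) * z ^ k % M ≠ g ^ (2 * t' + 1) * z' ^ k' % M := by
  intro h
  have hcast := (ZMod.natCast_eq_natCast_iff _ _ Q).2 (Nat.ModEq.of_dvd hQM h)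
  have hz1 : (z : ZMod Q) = 1 := by simpa using (ZMod.natCast_eq_natCast_iff z 1 Q).2 hz
  have hz1' : (z' : ZMod Q) = 1 := by simpa using (ZMod.natCast_eq_natCast_iff z' 1 Q).2 hz'
  push_cast at hcast
  rw [hz1, hz1', one_pow, one_pow, mul_one, mul_one,
    (isOfFinOrder_of_orderOf_eq_totient (by omega) hg).pow_eq_pow_iff_modEq] at hcast
  have := hcast.of_dvd (even_iff_two_dvd.1 (hg ▸ Nat.totient_even hQ))
  simp [Nat.ModEq, Nat.add_mod] at this

lemma add_add_add_eq_zero_of_card_eq_four {K : Type*} [Field K] [Fintype K] [DecidableEq K]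
    (hK : Fintype.card K = 4) {a b c d : K} (hab : a ≠ b) (hac : a ≠ c) (had : a ≠ d)
    (hbc : b ≠ c) (hbd : b ≠ d) (hcd : c ≠ d) : a + b + c + d = 0 := by
  have hnot :
      a ∉ ({b, c, d} : Finset K) ∧ b ∉ ({c, d} : Finset K) ∧ c ∉ ({d} : Finset K) := by
    simp [hab, hac, had, hbc, hbd, hcd]
  have huniv : ({a, b, c, d} : Finset K) = univ := by
    refine eq_univ_of_card _ ?_
    rw [card_insert_of_notMem hnot.1, card_insert_of_notMem hnot.2.1,
      card_insert_of_notMem hnot.2.2, card_singleton, hK]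
  have hsum := FiniteField.sum_pow_lt_card_sub_one K 1 (by omega)
  rw [← huniv, sum_insert hnot.1, sum_insert hnot.2.1, sum_insert hnot.2.2,
    sum_singleton] at hsum
  simpa [add_assoc] using hsum

lemma F4_add_add_add_eq_zero {a b c d : F4} (hab : a ≠ b) (hac : a ≠ c) (had : a ≠ d)
    (hbc : b ≠ c) (hbd : b ≠ d) (hcd : c ≠ d) : a + b + c + d = 0 := by
  classical
  have := Fintype.ofFinite F4
  refine add_add_add_eq_zero_of_card_eq_four ?_ hab hac had hbc hbd hcd
  rw [← Nat.card_eq_fintype_card, GaloisField.card 2 2 two_ne_zero]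
  norm_num

lemma GC_eq_image {h : ℕ} (hh : h ≤ 1) (g z M dh e : ℕ) :
    GC h g z M dh e =
      (range dh ×ˢ range e).image fun tk => g ^ (2 * tk.1 + h) * z ^ tk.2 % M := by
  interval_cases h
  · rfl
  · simp only [GC, GC1, GC0, one_ne_zero, if_false, image_image]
    refine image_congr fun tk _ => ?_
    simp only [Function.comp_apply, Nat.mul_mod_mod, pow_succ', mul_assoc]

lemma scaled_GC_one_eq_image {s M N : ℕ} (hN : s * M = N) (g z dh e : ℕ) :
    scaled s (GC 1 g z M dh e) = (scaled s (GC 0 g z M dh e)).image (fun u => g * u % N) := by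
  simp only [scaled, GC_eq_image (le_refl 1), GC_eq_image zero_le_one, image_image]
  refine image_congr fun tk _ => ?_
  simp only [Function.comp_apply, ← hN, mul_left_comm g s, Nat.mul_mod_mul_left, Nat.mul_mod_mod,
    pow_succ', mul_assoc, add_zero]

lemma scaled_two_scaled_GC_eq_image {h s M P : ℕ} (hh : h ≤ 1) (hP : s * M = P)
    (g z dh e : ℕ) :
    scaled 2 (scaled s (GC h g z M dh e)) =
      (scaled s (GC h g z (2 * M) dh e)).image (fun u => 2 * (u % P)) := by
  simp only [scaled, GC_eq_image hh, image_image]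
  refine image_congr fun tk _ => ?_
  simp only [Function.comp_apply, ← hP, Nat.mul_mod_mul_left,
    Nat.mod_mod_of_dvd _ (dvd_mul_left M 2)]

lemma UnionH_one_eq_image (p q m n g y : ℕ) :
    UnionH p q m n g y 1 =
      (UnionH p q m n g y 0).image (fun u => g * u % (2 * (p ^ m * q ^ n))) := by
  simp only [UnionH, image_union, biUnion_image]
  refine congr_arg₂ _ (congr_arg₂ _ ?_ ?_) ?_
  · refine biUnion_congr rfl fun i hi => biUnion_congr rfl fun j hj => ?_
    refine scaled_GC_one_eq_image ?_ _ _ _ _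
    rw [mul_left_comm, pow_sub_mul_pow_mul_pow_sub_mul_pow (mem_Icc.1 hi).2 (mem_Icc.1 hj).2]
  · refine biUnion_congr rfl fun i hi => scaled_GC_one_eq_image ?_ _ _ _ _
    rw [← pow_sub_mul_pow p (mem_Icc.1 hi).2]
    ring
  · refine biUnion_congr rfl fun j hj => scaled_GC_one_eq_image ?_ _ _ _ _
    rw [← pow_sub_mul_pow q (mem_Icc.1 hj).2]
    ring

lemma Union2H_eq_image {h : ℕ} (hh : h ≤ 1) (p q m n g y : ℕ) :
    Union2H p q m n g y h =
      (UnionH p q m n g y h).image (fun u => 2 * (u % (p ^ m * q ^ n))) := by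
  simp only [Union2H, UnionH, image_union, biUnion_image]
  refine congr_arg₂ _ (congr_arg₂ _ ?_ ?_) ?_
  · refine biUnion_congr rfl fun i hi => biUnion_congr rfl fun j hj => ?_
    exact scaled_two_scaled_GC_eq_image hh
      (pow_sub_mul_pow_mul_pow_sub_mul_pow (mem_Icc.1 hi).2 (mem_Icc.1 hj).2) _ _ _ _
  · refine biUnion_congr rfl fun i hi => scaled_two_scaled_GC_eq_image hh ?_ _ _ _ _
    rw [← pow_sub_mul_pow p (mem_Icc.1 hi).2]
    ring
  · refine biUnion_congr rfl fun j hj => scaled_two_scaled_GC_eq_image hh ?_ _ _ _ _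
    rw [← pow_sub_mul_pow q (mem_Icc.1 hj).2]
    ring

/-- Every element of the odd class `UnionH … h` has this shape, with `z = y` on the pieces
`H^{(2p^i q^j)}` and `z = 1` on `H^{(2p^i)}` (`j = 0`) and `H^{(2q^j)}` (`i = 0`). -/
def MemPiece (p q m n g z h i j u : ℕ) : Prop :=
  ∃ t k, u = p ^ (m - i) * q ^ (n - j) * (g ^ (2 * t + h) * z ^ k % (2 * (p ^ i * q ^ j)))

lemma exists_memPiece_of_mem_UnionH {p q m n g y h u : ℕ} (hh : h ≤ 1)
    (hu : u ∈ UnionH p q m n g y h) :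
    ∃ i j z, i ≤ m ∧ j ≤ n ∧ 0 < i + j ∧ (z = 1 ∨ 0 < j ∧ z = y) ∧
      MemPiece p q m n g z h i j u := by
  simp only [UnionH, H2PQ, D2PQ, H2P, D2P, H2Q, D2Q, scaled, GC_eq_image hh, mem_union,
    mem_biUnion, mem_Icc, mem_image, mem_product, mem_range, Prod.exists] at hu
  rcases hu with
    (⟨i, hi, j, hj, -, ⟨t, k, -, rfl⟩, rfl⟩ | ⟨i, hi, -, ⟨t, k, -, rfl⟩, rfl⟩) |
      ⟨j, hj, -, ⟨t, k, -, rfl⟩, rfl⟩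
  · exact ⟨i, j, y, hi.2, hj.2, by omega, Or.inr ⟨hj.1, rfl⟩, t, k, rfl⟩
  · exact ⟨i, 0, 1, hi.2, Nat.zero_le n, hi.1, Or.inl rfl, t, k, by simp⟩
  · exact ⟨0, j, 1, Nat.zero_le m, hj.2, by omega, Or.inl rfl, t, k, by simp⟩

lemma MemPiece.odd_lt_gcd {p q m n g z h i j u : ℕ} (hp : Odd p) (hq : Odd q)
    (hg : Nat.Coprime g (2 * (p * q))) (hz : Nat.Coprime z (2 * (p * q))) (hi : i ≤ m)
    (hj : j ≤ n) (hu : MemPiece p q m n g z h i j u) :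
    Odd u ∧ u < 2 * (p ^ m * q ^ n) ∧ u.gcd (p ^ m * q ^ n) = p ^ (m - i) * q ^ (n - j) := by
  obtain ⟨t, k, rfl⟩ := hu
  have hsT := pow_sub_mul_pow_mul_pow_sub_mul_pow (p := p) (q := q) hi hj
  have hs : 0 < p ^ (m - i) * q ^ (n - j) := Nat.mul_pos (pow_pos hp.pos _) (pow_pos hq.pos _)
  have hT : 0 < 2 * (p ^ i * q ^ j) := by have := hp.pos; have := hq.pos; positivity
  set x := g ^ (2 * t + h) * z ^ k % (2 * (p ^ i * q ^ j))
  have hx : Nat.Coprime x (2 * (p ^ i * q ^ j)) := by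
    rw [Nat.Coprime, (Nat.mod_modEq _ _).gcd_eq]
    exact ((hg.two_mul_pow_mul_pow i j).pow_left _).mul_left
      ((hz.two_mul_pow_mul_pow i j).pow_left _)
  refine ⟨(hp.pow.mul hq.pow).mul (Nat.Coprime.coprime_mul_right_right hx).odd_of_right, ?_, ?_⟩
  · calc _ < p ^ (m - i) * q ^ (n - j) * (2 * (p ^ i * q ^ j)) :=
          Nat.mul_lt_mul_of_pos_left (Nat.mod_lt _ hT) hs
      _ = 2 * (p ^ m * q ^ n) := by rw [← hsT]; ring
  · rw [← hsT, Nat.gcd_mul_left, (Nat.Coprime.coprime_mul_left_right hx).gcd_eq_one, mul_one]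

lemma odd_lt_ne_of_mem_UnionH {p q m n g y h u : ℕ} (hp : p.Prime) (hq : q.Prime)
    (hpq : p ≠ q) (hpodd : Odd p) (hqodd : Odd q) (hg : Nat.Coprime g (2 * (p * q)))
    (hy : Nat.Coprime y (2 * (p * q))) (hh : h ≤ 1) (hu : u ∈ UnionH p q m n g y h) :
    Odd u ∧ u < 2 * (p ^ m * q ^ n) ∧ u ≠ p ^ m * q ^ n := by
  obtain ⟨i, j, z, hi, hj, hij, hz, hu⟩ := exists_memPiece_of_mem_UnionH hh hu
  have hz' : Nat.Coprime z (2 * (p * q)) :=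
    hz.elim (fun h => h ▸ Nat.coprime_one_left _) fun h => h.2 ▸ hy
  obtain ⟨hodd, hlt, hgcd⟩ := hu.odd_lt_gcd hpodd hqodd hg hz' hi hj
  refine ⟨hodd, hlt, ?_⟩
  rintro rfl
  rw [Nat.gcd_self] at hgcd
  have := pow_mul_pow_inj hp hq hpq hgcd
  omega

lemma disjoint_UnionH_zero_one {p q m n g y : ℕ} (hp : p.Prime) (hq : q.Prime) (hpq : p ≠ q)
    (hpodd : Odd p) (hqodd : Odd q) (hg : Nat.Coprime g (2 * (p * q)))
    (hy : Nat.Coprime y (2 * (p * q))) (hy1 : y ≡ 1 [MOD 2 * q])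
    (hgp : orderOf (g : ZMod (2 * p)) = Nat.totient (2 * p))
    (hgq : orderOf (g : ZMod (2 * q)) = Nat.totient (2 * q)) :
    Disjoint (UnionH p q m n g y 0) (UnionH p q m n g y 1) := by
  rw [disjoint_left]
  intro u hu0 hu1
  obtain ⟨i, j, z, hi, hj, hij, hz, hu0⟩ := exists_memPiece_of_mem_UnionH zero_le_one hu0
  obtain ⟨i', j', z', hi', hj', -, hz', hu1⟩ := exists_memPiece_of_mem_UnionH le_rfl hu1
  have hcop : ∀ {z j : ℕ}, (z = 1 ∨ 0 < j ∧ z = y) → Nat.Coprime z (2 * (p * q)) :=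
    fun hz => hz.elim (fun h => h ▸ Nat.coprime_one_left _) fun h => h.2 ▸ hy
  have hs := (hu0.odd_lt_gcd hpodd hqodd hg (hcop hz) hi hj).2.2.symm.trans
    (hu1.odd_lt_gcd hpodd hqodd hg (hcop hz') hi' hj').2.2
  obtain ⟨hii, hjj⟩ := pow_mul_pow_inj hp hq hpq hs
  obtain rfl : i = i' := by omega
  obtain rfl : j = j' := by omega
  obtain ⟨t, k, rfl⟩ := hu0
  obtain ⟨t', k', hu⟩ := hu1
  have hx := Nat.eq_of_mul_eq_mul_left (Nat.mul_pos (pow_pos hp.pos _) (pow_pos hq.pos _)) hu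
  rcases Nat.eq_zero_or_pos j with rfl | hj0
  · obtain rfl : z = 1 := by omega
    obtain rfl : z' = 1 := by omega
    exact pow_even_mul_mod_ne_pow_odd_mul_mod
      (mul_dvd_mul_left 2 (dvd_mul_of_dvd_left (dvd_pow_self p (by omega)) _))
      (by have := hp.two_le; omega) hgp rfl rfl t k t' k' hx
  · have hzq : ∀ {z}, (z = 1 ∨ 0 < j ∧ z = y) → z ≡ 1 [MOD 2 * q] :=
      fun hz => hz.elim (fun h => h ▸ rfl) fun h => h.2 ▸ hy1
    exact pow_even_mul_mod_ne_pow_odd_mul_mod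
      (mul_dvd_mul_left 2 (dvd_mul_of_dvd_right (dvd_pow_self q hj0.ne') _))
      (by have := hq.two_le; omega) hgq (hzq hz) (hzq hz') t k t' k' hx

lemma even_lt_ne_zero_of_mem_Union2H {p q m n g y h v : ℕ} (hh : h ≤ 1)
    (hP : Odd (p ^ m * q ^ n))
    (hA : ∀ u ∈ UnionH p q m n g y h, Odd u ∧ u < 2 * (p ^ m * q ^ n) ∧ u ≠ p ^ m * q ^ n)
    (hv : v ∈ Union2H p q m n g y h) : Even v ∧ v < 2 * (p ^ m * q ^ n) ∧ v ≠ 0 := by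
  rw [Union2H_eq_image hh, mem_image] at hv
  obtain ⟨u, hu, rfl⟩ := hv
  obtain ⟨hodd, hlt, hne⟩ := hA u hu
  have := Nat.mod_lt u hP.pos
  exact ⟨even_two_mul _, by omega,
    mul_ne_zero two_ne_zero (mod_ne_zero_of_odd_of_lt_two_mul hodd hlt hne)⟩

lemma disjoint_Union2H_zero_one {p q m n g y : ℕ} (hP : Odd (p ^ m * q ^ n))
    (hA : ∀ h ≤ 1, ∀ u ∈ UnionH p q m n g y h, Odd u ∧ u < 2 * (p ^ m * q ^ n))
    (hAB : Disjoint (UnionH p q m n g y 0) (UnionH p q m n g y 1)) :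
    Disjoint (Union2H p q m n g y 0) (Union2H p q m n g y 1) := by
  simp only [Union2H_eq_image zero_le_one, Union2H_eq_image le_rfl, disjoint_left, mem_image]
  rintro _ ⟨u, hu, rfl⟩ ⟨v, hv, hvu⟩
  obtain rfl : v = u := injOn_two_mul_mod hP (hA 1 le_rfl v hv) (hA 0 zero_le_one u hu) hvu
  exact disjoint_left.1 hAB hu hv

lemma card_Union2H {p q m n g y h : ℕ} (hh : h ≤ 1) (hP : Odd (p ^ m * q ^ n))
    (hA : ∀ u ∈ UnionH p q m n g y h, Odd u ∧ u < 2 * (p ^ m * q ^ n)) :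
    #(Union2H p q m n g y h) = #(UnionH p q m n g y h) := by
  rw [Union2H_eq_image hh]
  exact card_image_of_injOn ((injOn_two_mul_mod hP).mono hA)

lemma card_UnionH_one {p q m n g y : ℕ} (hg : Nat.Coprime g (2 * (p ^ m * q ^ n)))
    (hA : ∀ u ∈ UnionH p q m n g y 0, u < 2 * (p ^ m * q ^ n)) :
    #(UnionH p q m n g y 1) = #(UnionH p q m n g y 0) := by
  rw [UnionH_one_eq_image]
  exact card_image_of_injOn ((injOn_mul_mod hg).mono hA)

lemma seqS_eq_of_lt {p q m n g y u : ℕ} {a b c d e : F4} (hu : u < 2 * (p ^ m * q ^ n))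
    (hP : Odd (p ^ m * q ^ n))
    (hA : ∀ h ≤ 1, ∀ v ∈ UnionH p q m n g y h,
      Odd v ∧ v < 2 * (p ^ m * q ^ n) ∧ v ≠ p ^ m * q ^ n)
    (hC : ∀ h ≤ 1, ∀ v ∈ Union2H p q m n g y h,
      Even v ∧ v < 2 * (p ^ m * q ^ n) ∧ v ≠ 0)
    (hAB : Disjoint (UnionH p q m n g y 0) (UnionH p q m n g y 1))
    (hCD : Disjoint (Union2H p q m n g y 0) (Union2H p q m n g y 1)) :
    seqS p q m n g y a b c d e u =
      (if u = p ^ m * q ^ n then e else 0) + (if u ∈ UnionH p q m n g y 0 then a else 0) +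
        (if u ∈ UnionH p q m n g y 1 then b else 0) +
        (if u ∈ Union2H p q m n g y 0 then c else 0) +
        (if u ∈ Union2H p q m n g y 1 then d else 0) := by
  have hAC : ∀ h ≤ 1, u ∈ UnionH p q m n g y h →
      u ∉ Union2H p q m n g y 0 ∧ u ∉ Union2H p q m n g y 1 := fun h hh hu =>
    ⟨fun hu' => Nat.not_even_iff_odd.2 (hA h hh u hu).1 (hC 0 zero_le_one u hu').1,
      fun hu' => Nat.not_even_iff_odd.2 (hA h hh u hu).1 (hC 1 le_rfl u hu').1⟩
  have hCP : ∀ h ≤ 1, u ∈ Union2H p q m n g y h → u ≠ p ^ m * q ^ n :=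
    fun h hh hu hP' => Nat.not_even_iff_odd.2 hP (hP' ▸ (hC h hh u hu).1)
  simp only [seqS, Nat.mod_eq_of_lt hu]
  by_cases hA0 : u ∈ UnionH p q m n g y 0
  · obtain ⟨hodd, -, hne⟩ := hA 0 zero_le_one u hA0
    simp [hodd.pos.ne', hne, hA0, disjoint_left.1 hAB hA0, hAC 0 zero_le_one hA0]
  by_cases hA1 : u ∈ UnionH p q m n g y 1
  · obtain ⟨hodd, -, hne⟩ := hA 1 le_rfl u hA1
    simp [hodd.pos.ne', hne, hA0, hA1, hAC 1 le_rfl hA1]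
  by_cases hC0 : u ∈ Union2H p q m n g y 0
  · simp [(hC 0 zero_le_one u hC0).2.2, hCP 0 zero_le_one hC0, hA0, hA1, hC0,
      disjoint_left.1 hCD hC0]
  by_cases hC1 : u ∈ Union2H p q m n g y 1
  · simp [(hC 1 le_rfl u hC1).2.2, hCP 1 le_rfl hC1, hA0, hA1, hC0, hC1]
  rcases eq_or_ne u 0 with rfl | hu0
  · simp [hP.pos.ne, hA0, hA1, hC0, hC1]
  · simp [hu0, hA0, hA1, hC0, hC1]

lemma eval_one_genPoly (p q m n g y : ℕ) (a b c d e : F4) :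
    (genPoly p q m n g y a b c d e).eval 1 =
      ∑ u ∈ range (2 * (p ^ m * q ^ n)), seqS p q m n g y a b c d e u := by
  simp [genPoly, eval_finsetSum]

lemma sum_range_seqS {p q m n g y : ℕ} (hP : Odd (p ^ m * q ^ n))
    (hg : Nat.Coprime g (2 * (p ^ m * q ^ n)))
    (hA : ∀ h ≤ 1, ∀ u ∈ UnionH p q m n g y h,
      Odd u ∧ u < 2 * (p ^ m * q ^ n) ∧ u ≠ p ^ m * q ^ n)
    (hAB : Disjoint (UnionH p q m n g y 0) (UnionH p q m n g y 1)) (a b c d e : F4) :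
    ∑ u ∈ range (2 * (p ^ m * q ^ n)), seqS p q m n g y a b c d e u =
      e + #(UnionH p q m n g y 0) • (a + b + c + d) := by
  have hA' : ∀ h ≤ 1, ∀ u ∈ UnionH p q m n g y h, Odd u ∧ u < 2 * (p ^ m * q ^ n) :=
    fun h hh u hu => ⟨(hA h hh u hu).1, (hA h hh u hu).2.1⟩
  have hC := fun h (hh : h ≤ 1) v => even_lt_ne_zero_of_mem_Union2H (v := v) hh hP (hA h hh)
  have hrange : ∀ s : Finset ℕ, (∀ v ∈ s, v < 2 * (p ^ m * q ^ n)) →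
      range (2 * (p ^ m * q ^ n)) ∩ s = s :=
    fun s hs => inter_eq_right.2 fun v hv => mem_range.2 (hs v hv)
  calc _ = ∑ u ∈ range (2 * (p ^ m * q ^ n)),
        ((if u = p ^ m * q ^ n then e else 0) + (if u ∈ UnionH p q m n g y 0 then a else 0) +
          (if u ∈ UnionH p q m n g y 1 then b else 0) +
          (if u ∈ Union2H p q m n g y 0 then c else 0) +
          (if u ∈ Union2H p q m n g y 1 then d else 0)) :=
        sum_congr rfl fun u hu => seqS_eq_of_lt (mem_range.1 hu) hP hA hC hAB
          (disjoint_Union2H_zero_one hP hA' hAB)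
    _ = e + #(UnionH p q m n g y 0) • a + #(UnionH p q m n g y 1) • b +
          #(Union2H p q m n g y 0) • c + #(Union2H p q m n g y 1) • d := by
        simp only [sum_add_distrib, sum_ite_eq', sum_ite_mem, sum_const]
        rw [if_pos (mem_range.2 (by have := hP.pos; omega)),
          hrange _ fun u hu => (hA 0 zero_le_one u hu).2.1,
          hrange _ fun u hu => (hA 1 le_rfl u hu).2.1,
          hrange _ fun v hv => (hC 0 zero_le_one v hv).2.1,
          hrange _ fun v hv => (hC 1 le_rfl v hv).2.1]
    _ = e + #(UnionH p q m n g y 0) • (a + b + c + d) := by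
        rw [card_Union2H zero_le_one hP (hA' 0 zero_le_one), card_Union2H le_rfl hP (hA' 1 le_rfl),
          card_UnionH_one hg fun u hu => (hA 0 zero_le_one u hu).2.1]
        simp only [smul_add, add_assoc]

theorem statement10_general
    (p q m n g y : ℕ)
    (hp : p.Prime) (hq : q.Prime) (hpq : p ≠ q) (hpodd : Odd p) (hqodd : Odd q)
    (hm : 1 ≤ m) (hn : 1 ≤ n)
    (hg2p : ∀ i, 1 ≤ i → i ≤ m → orderOf (g : ZMod (2 * p ^ i)) = Nat.totient (2 * p ^ i))
    (hg2q : ∀ j, 1 ≤ j → j ≤ n → orderOf (g : ZMod (2 * q ^ j)) = Nat.totient (2 * q ^ j))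
    (hyg : y ≡ g [MOD 2 * p ^ m]) (hy1 : y ≡ 1 [MOD 2 * q ^ n])
    (a b c d e : F4)
    (hab : a ≠ b) (hac : a ≠ c) (had : a ≠ d) (hbc : b ≠ c) (hbd : b ≠ d) (hcd : c ≠ d)
    (he : e ≠ 0)
    : (genPoly p q m n g y a b c d e).eval 1 = e ∧
      (genPoly p q m n g y a b c d e).eval 1 ≠ 0 := by
  have hgp := hg2p 1 le_rfl hm
  have hgq := hg2q 1 le_rfl hn
  rw [pow_one] at hgp hgq
  have hg2p' := coprime_of_orderOf_eq_totient (Nat.mul_pos two_pos hp.pos) hgp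
  have hg2q' := coprime_of_orderOf_eq_totient (Nat.mul_pos two_pos hq.pos) hgq
  have hyp : y ≡ g [MOD 2 * p] := hyg.of_dvd (mul_dvd_mul_left 2 (dvd_pow_self p (by omega)))
  have hyq : y ≡ 1 [MOD 2 * q] := hy1.of_dvd (mul_dvd_mul_left 2 (dvd_pow_self q (by omega)))
  have hy : Nat.Coprime y (2 * (p * q)) :=
    Nat.Coprime.two_mul_mul (hyp.gcd_eq.trans hg2p') (hyq.gcd_eq.trans (Nat.coprime_one_left _))
  have hg := hg2p'.two_mul_mul hg2q'
  have hA := fun h (hh : h ≤ 1) u (hu : u ∈ UnionH p q m n g y h) =>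
    odd_lt_ne_of_mem_UnionH hp hq hpq hpodd hqodd hg hy hh hu
  have hAB := disjoint_UnionH_zero_one (m := m) (n := n) hp hq hpq hpodd hqodd hg hy hyq hgp hgq
  rw [eval_one_genPoly,
    sum_range_seqS (hpodd.pow.mul hqodd.pow) (hg.two_mul_pow_mul_pow m n) hA hAB,
    F4_add_add_add_eq_zero hab hac had hbc hbd hcd, smul_zero, add_zero]
  exact ⟨rfl, he⟩

theorem statement10
    (p q m n g y : ℕ)
    (hp : p.Prime) (hq : q.Prime) (hpq : p ≠ q) (hpodd : Odd p) (hqodd : Odd q)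
    (hm : 1 ≤ m) (hn : 1 ≤ n) (hgodd : Odd g)
    (hgp : ∀ i, 1 ≤ i → i ≤ m → orderOf (g : ZMod (p ^ i)) = Nat.totient (p ^ i))
    (hg2p : ∀ i, 1 ≤ i → i ≤ m → orderOf (g : ZMod (2 * p ^ i)) = Nat.totient (2 * p ^ i))
    (hgq : ∀ j, 1 ≤ j → j ≤ n → orderOf (g : ZMod (q ^ j)) = Nat.totient (q ^ j))
    (hg2q : ∀ j, 1 ≤ j → j ≤ n → orderOf (g : ZMod (2 * q ^ j)) = Nat.totient (2 * q ^ j))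
    (hylt : y < 2 * (p ^ m * q ^ n))
    (hyg : y ≡ g [MOD 2 * p ^ m]) (hy1 : y ≡ 1 [MOD 2 * q ^ n])
    (a b c d e : F4)
    (hab : a ≠ b) (hac : a ≠ c) (had : a ≠ d) (hbc : b ≠ c) (hbd : b ≠ d) (hcd : c ≠ d)
    (he : e ≠ 0)
    : (genPoly p q m n g y a b c d e).eval 1 = e ∧
      (genPoly p q m n g y a b c d e).eval 1 ≠ 0 :=
  statement10_general p q m n g y hp hq hpq hpodd hqodd hm hn hg2p hg2q hyg hy1 a b c d e hab hac
    had hbc hbd hcd he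

end
end

section
/- The ring Z_{2p^m q^n} of residues modulo 2p^m q^n is the disjoint union of the following sets: {0, p^m q^n}; the sets p^{m-i} q^{n-j} D_h^{(2p^i q^j)} and p^{m-i} q^{n-j} · 2 D_h^{(p^i q^j)} for 1 ≤ i ≤ m, 1 ≤ j ≤ n, h ∈ {0,1}; the sets p^m q^{n-j} D_h^{(2q^j)} and p^m q^{n-j} · 2 D_h^{(q^j)} for 1 ≤ j ≤ n, h ∈ {0,1}; and the sets p^{m-i} q^n D_h^{(2p^i)} and p^{m-i} q^n · 2 D_h^{(p^i)} for 1 ≤ i ≤ m, h ∈ {0,1}. -/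
open Finset Polynomial

noncomputable section

/-- Index set for the pieces of the partition of `Z_{2 p^m q^n}`:
`(h, t, i, j)` with `h, t ∈ {0,1}`, `0 ≤ i ≤ m`, `0 ≤ j ≤ n`, `(i,j) ≠ (0,0)`.
Here `t = 0` encodes the sets coming from `D_h^{(2·)}` and `t = 1` the sets `2·D_h^{(·)}`;
`i = 0` (resp. `j = 0`) encodes the families involving only `q` (resp. only `p`). -/
def pieceIdx (m n : ℕ) : Finset (ℕ × ℕ × ℕ × ℕ) :=
  Finset.range 2 ×ˢ Finset.range 2 ×ˢ
    ((Finset.range (m + 1) ×ˢ Finset.range (n + 1)).erase (0, 0))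

/-- The pieces of the partition of `Z_{2 p^m q^n}`. -/
def piece (p q m n g y : ℕ) : ℕ × ℕ × ℕ × ℕ → Finset ℕ
  | (h, t, i, j) =>
    if i = 0 then
      (if j = 0 then ∅
        else if t = 0 then scaled (p ^ m * q ^ (n - j)) (D2Q q g h j)
        else scaled (2 * (p ^ m * q ^ (n - j))) (DQ q g h j))
    else if j = 0 then
      (if t = 0 then scaled (p ^ (m - i) * q ^ n) (D2P p g h i)
        else scaled (2 * (p ^ (m - i) * q ^ n)) (DP p g h i))
    else
      (if t = 0 then scaled (p ^ (m - i) * q ^ (n - j)) (D2PQ p q g y h i j)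
        else scaled (2 * (p ^ (m - i) * q ^ (n - j))) (DPQ p q g y h i j))

/-! ### Auxiliary machinery for `statement17` -/

namespace St17

/-- The set of units of `ZMod M`, as a finset of naturals. -/
def UnitsF (M : ℕ) : Finset ℕ := {a ∈ Finset.range M | M.Coprime a}

lemma card_unitsF (M : ℕ) : (UnitsF M).card = M.totient := rfl

lemma mem_unitsF {M x : ℕ} : x ∈ UnitsF M ↔ x < M ∧ M.Coprime x := by
  simp [UnitsF, Finset.mem_filter]

lemma coprime_mod {M a : ℕ} (h : M.Coprime a) : M.Coprime (a % M) := by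
  unfold Nat.Coprime at *
  rw [Nat.gcd_comm, ← Nat.gcd_rec]
  exact h

lemma mul_mod_mod (g a M : ℕ) : g * (a % M) % M = g * a % M := by
  conv_rhs => rw [Nat.mul_mod]
  rw [Nat.mul_mod, Nat.mod_mod_of_dvd _ dvd_rfl]

lemma mem_GC0 {g y M D E x : ℕ} :
    x ∈ GC0 g y M D E ↔ ∃ t k, t < D ∧ k < E ∧ g ^ (2 * t) * y ^ k % M = x := by
  simp only [GC0, Finset.mem_image, Finset.mem_product, Finset.mem_range, Prod.exists]
  constructor
  · rintro ⟨t, k, ⟨ht, hk⟩, rfl⟩; exact ⟨t, k, ht, hk, rfl⟩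
  · rintro ⟨t, k, ht, hk, rfl⟩; exact ⟨t, k, ⟨ht, hk⟩, rfl⟩

lemma mem_GC1 {g y M D E x : ℕ} :
    x ∈ GC1 g y M D E ↔ ∃ t k, t < D ∧ k < E ∧ g ^ (2 * t + 1) * y ^ k % M = x := by
  simp only [GC1, Finset.mem_image]
  constructor
  · rintro ⟨w, hw, rfl⟩
    obtain ⟨t, k, ht, hk, rfl⟩ := mem_GC0.mp hw
    exact ⟨t, k, ht, hk, by rw [mul_mod_mod, ← mul_assoc, ← pow_succ']⟩
  · rintro ⟨t, k, ht, hk, rfl⟩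
    refine ⟨g ^ (2 * t) * y ^ k % M, mem_GC0.mpr ⟨t, k, ht, hk, rfl⟩, ?_⟩
    rw [mul_mod_mod, ← mul_assoc, ← pow_succ']

lemma GC0_subset {g y M D E : ℕ} (hM : 0 < M) (hg : g.Coprime M) (hy : y.Coprime M) :
    GC0 g y M D E ⊆ UnitsF M := by
  intro x hx
  obtain ⟨t, k, _, _, rfl⟩ := mem_GC0.mp hx
  refine mem_unitsF.mpr ⟨Nat.mod_lt _ hM, coprime_mod ?_⟩
  exact (((hg.pow_left _).mul (hy.pow_left _))).symm

lemma GC1_subset {g y M D E : ℕ} (hM : 0 < M) (hg : g.Coprime M) (hy : y.Coprime M) :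
    GC1 g y M D E ⊆ UnitsF M := by
  intro x hx
  obtain ⟨t, k, _, _, rfl⟩ := mem_GC1.mp hx
  refine mem_unitsF.mpr ⟨Nat.mod_lt _ hM, coprime_mod ?_⟩
  exact (((hg.pow_left _).mul (hy.pow_left _))).symm

lemma GC_subset {h g y M D E : ℕ} (hM : 0 < M) (hg : g.Coprime M) (hy : y.Coprime M) :
    GC h g y M D E ⊆ UnitsF M := by
  unfold GC; split
  · exact GC0_subset hM hg hy
  · exact GC1_subset hM hg hy

/-- Natural-number injectivity from ZMod injectivity. -/
lemma key_inj {g y M D E : ℕ} (hM : 2 ≤ M)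
    (hinj : ∀ s k s' k', s < 2 * D → s' < 2 * D → k < E → k' < E →
      (g : ZMod M) ^ s * (y : ZMod M) ^ k = (g : ZMod M) ^ s' * (y : ZMod M) ^ k' →
      s = s' ∧ k = k')
    {s k s' k'} (hs : s < 2 * D) (hs' : s' < 2 * D) (hk : k < E) (hk' : k' < E)
    (h : g ^ s * y ^ k % M = g ^ s' * y ^ k' % M) : s = s' ∧ k = k' := by
  apply hinj s k s' k' hs hs' hk hk'
  have := congrArg (fun a : ℕ => ((a : ZMod M))) h
  simpa only [ZMod.natCast_mod, Nat.cast_mul, Nat.cast_pow] using this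

lemma GC_main {g y M D E : ℕ} (hM : 2 ≤ M)
    (hg : g.Coprime M) (hy : y.Coprime M) (hD : 0 < D) (hE : 0 < E)
    (hcard : 2 * D * E = M.totient)
    (hinj : ∀ s k s' k', s < 2 * D → s' < 2 * D → k < E → k' < E →
      (g : ZMod M) ^ s * (y : ZMod M) ^ k = (g : ZMod M) ^ s' * (y : ZMod M) ^ k' →
      s = s' ∧ k = k') :
    GC0 g y M D E ∪ GC1 g y M D E = UnitsF M ∧
      Disjoint (GC0 g y M D E) (GC1 g y M D E) := by
  have hM0 : 0 < M := by omega
  constructor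
  · -- union = UnitsF
    set Full : Finset ℕ :=
      ((Finset.range (2 * D)) ×ˢ Finset.range E).image
        (fun sk => g ^ sk.1 * y ^ sk.2 % M) with hFull
    have hUnion : GC0 g y M D E ∪ GC1 g y M D E = Full := by
      ext x
      simp only [Finset.mem_union, hFull, Finset.mem_image, Finset.mem_product,
        Finset.mem_range, Prod.exists, mem_GC0, mem_GC1]
      constructor
      · rintro (⟨t, k, ht, hk, rfl⟩ | ⟨t, k, ht, hk, rfl⟩)
        · exact ⟨2 * t, k, ⟨by omega, hk⟩, rfl⟩
        · exact ⟨2 * t + 1, k, ⟨by omega, hk⟩, rfl⟩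
      · rintro ⟨s, k, ⟨hs, hk⟩, rfl⟩
        rcases Nat.even_or_odd s with ⟨t, rfl⟩ | ⟨t, rfl⟩
        · exact Or.inl ⟨t, k, by omega, hk, by rw [two_mul]⟩
        · exact Or.inr ⟨t, k, by omega, hk, by rw [two_mul]⟩
    rw [hUnion]
    have hsub : Full ⊆ UnitsF M := by
      rintro x hx
      simp only [hFull, Finset.mem_image, Finset.mem_product, Finset.mem_range,
        Prod.exists] at hx
      obtain ⟨s, k, ⟨hs, hk⟩, rfl⟩ := hx
      refine mem_unitsF.mpr ⟨Nat.mod_lt _ hM0, coprime_mod ?_⟩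
      exact (((hg.pow_left _).mul (hy.pow_left _))).symm
    have hcardFull : Full.card = 2 * D * E := by
      rw [hFull, Finset.card_image_of_injOn, Finset.card_product,
        Finset.card_range, Finset.card_range]
      rintro ⟨s, k⟩ hsk ⟨s', k'⟩ hsk' hEq
      simp only [Finset.mem_coe, Finset.mem_product, Finset.mem_range] at hsk hsk'
      obtain ⟨h1, h2⟩ := key_inj hM hinj hsk.1 hsk'.1 hsk.2 hsk'.2 hEq
      exact Prod.ext h1 h2
    apply Finset.eq_of_subset_of_card_le hsub
    rw [card_unitsF, hcardFull, hcard]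
  · -- disjoint
    rw [Finset.disjoint_left]
    rintro x h0 h1
    obtain ⟨t, k, ht, hk, rfl⟩ := mem_GC0.mp h0
    obtain ⟨t', k', ht', hk', hx⟩ := mem_GC1.mp h1
    obtain ⟨h1, -⟩ := key_inj hM hinj (by omega : 2 * t' + 1 < 2 * D)
      (by omega : 2 * t < 2 * D) hk' hk hx
    omega

end St17


namespace St17

lemma pow_modEq {M g : ℕ} {a b : ℕ} (hg : g.Coprime M)
    (h : (g : ZMod M) ^ a = (g : ZMod M) ^ b) : a ≡ b [MOD orderOf (g : ZMod M)] := by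
  have hu : ((ZMod.unitOfCoprime g hg : (ZMod M)ˣ) : ZMod M) = g :=
    ZMod.coe_unitOfCoprime g hg
  have h2 : (ZMod.unitOfCoprime g hg) ^ a = (ZMod.unitOfCoprime g hg) ^ b :=
    Units.ext (by simpa [hu] using h)
  have h3 := pow_eq_pow_iff_modEq.mp h2
  rwa [← orderOf_units, hu] at h3

lemma inj_two {A B s k s' k' : ℕ}
    (h1 : s + k ≡ s' + k' [MOD A]) (h2 : s ≡ s' [MOD B])
    (hs : s < Nat.lcm A B) (hs' : s' < Nat.lcm A B)
    (hk : k < Nat.gcd A B) (hk' : k' < Nat.gcd A B) : s = s' ∧ k = k' := by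
  have hE1 : s ≡ s' [MOD Nat.gcd A B] := h2.of_dvd (Nat.gcd_dvd_right A B)
  have hE2 : s + k ≡ s' + k' [MOD Nat.gcd A B] := h1.of_dvd (Nat.gcd_dvd_left A B)
  have hkk : k ≡ k' [MOD Nat.gcd A B] := hE1.add_left_cancel hE2
  have hk_eq : k = k' := by
    rwa [Nat.ModEq, Nat.mod_eq_of_lt hk, Nat.mod_eq_of_lt hk'] at hkk
  subst hk_eq
  have hsA : s ≡ s' [MOD A] := h1.add_right_cancel'
  have hsL : s ≡ s' [MOD Nat.lcm A B] := Nat.mod_lcm hsA h2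
  exact ⟨by rwa [Nat.ModEq, Nat.mod_eq_of_lt hs, Nat.mod_eq_of_lt hs'] at hsL, rfl⟩

lemma hinj_PQ {M Mp Mq g y A B : ℕ}
    (hMp : Mp ∣ M) (hMq : Mq ∣ M)
    (hgp : g.Coprime Mp) (hgq : g.Coprime Mq)
    (hyp : (y : ZMod Mp) = (g : ZMod Mp)) (hyq : (y : ZMod Mq) = 1)
    (hA : orderOf (g : ZMod Mp) = A) (hB : orderOf (g : ZMod Mq) = B) :
    ∀ s k s' k', s < Nat.lcm A B → s' < Nat.lcm A B →
      k < Nat.gcd A B → k' < Nat.gcd A B →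
      (g : ZMod M) ^ s * (y : ZMod M) ^ k = (g : ZMod M) ^ s' * (y : ZMod M) ^ k' →
      s = s' ∧ k = k' := by
  intro s k s' k' hs hs' hk hk' hEq
  have hp' := congrArg (ZMod.castHom hMp (ZMod Mp)) hEq
  have hq' := congrArg (ZMod.castHom hMq (ZMod Mq)) hEq
  simp only [map_mul, map_pow, map_natCast] at hp' hq'
  rw [hyp, ← pow_add, ← pow_add] at hp'
  rw [hyq, one_pow, mul_one, one_pow, mul_one] at hq'
  have h1 : s + k ≡ s' + k' [MOD A] := by
    have := pow_modEq hgp hp'; rwa [hA] at this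
  have h2 : s ≡ s' [MOD B] := by
    have := pow_modEq hgq hq'; rwa [hB] at this
  exact inj_two h1 h2 hs hs' hk hk'

lemma hinj_single {M g A : ℕ} (hg : g.Coprime M) (hA : orderOf (g : ZMod M) = A) :
    ∀ s k s' k', s < A → s' < A → k < 1 → k' < 1 →
      (g : ZMod M) ^ s * ((1 : ℕ) : ZMod M) ^ k = (g : ZMod M) ^ s' * ((1 : ℕ) : ZMod M) ^ k' →
      s = s' ∧ k = k' := by
  intro s k s' k' hs hs' hk hk' hEq
  simp only [Nat.cast_one, one_pow, mul_one] at hEq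
  have h := pow_modEq hg hEq
  rw [hA] at h
  exact ⟨by rwa [Nat.ModEq, Nat.mod_eq_of_lt hs, Nat.mod_eq_of_lt hs'] at h, by omega⟩

lemma coprime_of_orderOf_eq_totient {M g : ℕ} (hM : 2 ≤ M)
    (h : orderOf (g : ZMod M) = M.totient) : g.Coprime M := by
  have h0 : M.totient ≠ 0 := (Nat.totient_pos.mpr (by omega : 0 < M)).ne'
  rw [← ZMod.isUnit_iff_coprime]
  refine IsUnit.of_pow_eq_one (n := orderOf (g : ZMod M)) (pow_orderOf_eq_one _) ?_
  rw [h]; exact h0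

end St17

namespace St17

lemma classify_core {p q m n x K : ℕ} (hp : p.Prime) (hq : q.Prime) (hpq : p ≠ q)
    (hx0 : x ≠ 0) (hxlt : x < K * (p ^ m * q ^ n))
    (hxN : ¬ p ^ m * q ^ n ∣ x) :
    ∃ i j w, i ≤ m ∧ j ≤ n ∧ ¬(i = 0 ∧ j = 0) ∧
      x = p ^ (m - i) * q ^ (n - j) * w ∧ w < K * (p ^ i * q ^ j) ∧
      w.Coprime (p ^ i * q ^ j) ∧ w ∣ x := by
  set a := x.factorization p with ha
  set b := x.factorization q with hb
  have hpd : p ^ min a m ∣ x :=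
    dvd_trans (pow_dvd_pow p (min_le_left a m)) (Nat.ordProj_dvd x p)
  have hqd : q ^ min b n ∣ x :=
    dvd_trans (pow_dvd_pow q (min_le_left b n)) (Nat.ordProj_dvd x q)
  have hcop : (p ^ min a m).Coprime (q ^ min b n) :=
    Nat.Coprime.pow _ _ ((Nat.coprime_primes hp hq).mpr hpq)
  have hcd : p ^ min a m * q ^ min b n ∣ x := hcop.mul_dvd_of_dvd_of_dvd hpd hqd
  set c := p ^ min a m * q ^ min b n with hc
  have hc0 : 0 < c := Nat.mul_pos (pow_pos hp.pos _) (pow_pos hq.pos _)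
  set w := x / c with hw
  have hxw : x = c * w := (Nat.mul_div_cancel' hcd).symm
  have hwd : w ∣ x := ⟨c, by rw [hxw, mul_comm]⟩
  refine ⟨m - min a m, n - min b n, w, by omega, by omega, ?_, ?_, ?_, ?_, hwd⟩
  · -- not both zero
    rintro ⟨hi0, hj0⟩
    have hma : min a m = m := by omega
    have hnb : min b n = n := by omega
    exact hxN (by rw [← hma, ← hnb]; exact hcd)
  · -- decomposition
    rw [Nat.sub_sub_self (min_le_right a m), Nat.sub_sub_self (min_le_right b n)]
    exact hxw
  · -- bound
    have hsplit : K * (p ^ m * q ^ n)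
        = c * (K * (p ^ (m - min a m) * q ^ (n - min b n))) := by
      rw [hc]
      have h1 : p ^ min a m * p ^ (m - min a m) = p ^ m := by
        rw [← pow_add]; congr 1; omega
      have h2 : q ^ min b n * q ^ (n - min b n) = q ^ n := by
        rw [← pow_add]; congr 1; omega
      calc K * (p ^ m * q ^ n)
          = K * ((p ^ min a m * p ^ (m - min a m)) * (q ^ min b n * q ^ (n - min b n))) := by
            rw [h1, h2]
        _ = p ^ min a m * q ^ min b n * (K * (p ^ (m - min a m) * q ^ (n - min b n))) := by
            ring
    rw [hxw, hsplit] at hxlt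
    exact Nat.lt_of_mul_lt_mul_left hxlt
  · -- coprimality
    have hwp : Nat.Coprime w (p ^ (m - min a m)) := by
      rcases Nat.eq_zero_or_pos (m - min a m) with h0 | hpos
      · rw [h0, pow_zero]; exact Nat.coprime_one_right w
      · have hma : min a m = a := by omega
        have hnd : ¬ p ∣ w := by
          intro hdvd
          obtain ⟨w', hw'⟩ := hdvd
          have : p ^ (a + 1) ∣ x := by
            rw [hxw, hc, hma, hw']
            exact ⟨q ^ min b n * w', by ring⟩
          have := (Nat.Prime.pow_dvd_iff_le_factorization hp hx0).mp this
          omega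
        exact Nat.Coprime.pow_right _ ((hp.coprime_iff_not_dvd.mpr hnd).symm)
    have hwq : Nat.Coprime w (q ^ (n - min b n)) := by
      rcases Nat.eq_zero_or_pos (n - min b n) with h0 | hpos
      · rw [h0, pow_zero]; exact Nat.coprime_one_right w
      · have hnb : min b n = b := by omega
        have hnd : ¬ q ∣ w := by
          intro hdvd
          obtain ⟨w', hw'⟩ := hdvd
          have : q ^ (b + 1) ∣ x := by
            rw [hxw, hc, hnb, hw']
            exact ⟨p ^ min a m * w', by ring⟩
          have := (Nat.Prime.pow_dvd_iff_le_factorization hq hx0).mp this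
          omega
        exact Nat.Coprime.pow_right _ ((hq.coprime_iff_not_dvd.mpr hnd).symm)
    exact hwp.mul_right hwq

lemma val_min {r mm ii z w x : ℕ} (hr : r.Prime) (hii : ii ≤ mm)
    (hx : x = r ^ (mm - ii) * z * w)
    (hz : ¬ r ∣ z) (hz0 : z ≠ 0) (hw0 : w ≠ 0)
    (hcop : 1 ≤ ii → ¬ r ∣ w) :
    min (x.factorization r) mm = mm - ii := by
  have hr0 : r ^ (mm - ii) ≠ 0 := pow_ne_zero _ hr.pos.ne'
  have hx0 : x ≠ 0 := by rw [hx]; exact mul_ne_zero (mul_ne_zero hr0 hz0) hw0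
  have hdvd : r ^ (mm - ii) ∣ x := ⟨z * w, by rw [hx, mul_assoc]⟩
  have hle : mm - ii ≤ x.factorization r := (hr.pow_dvd_iff_le_factorization hx0).mp hdvd
  rcases Nat.eq_zero_or_pos ii with rfl | hpos
  · omega
  · have hnd : ¬ r ^ (mm - ii + 1) ∣ x := by
      intro hdd
      have h2 : r ^ (mm - ii) * r ∣ r ^ (mm - ii) * (z * w) := by
        rw [← pow_succ, ← mul_assoc, ← hx]; exact hdd
      have hrzw : r ∣ z * w := (mul_dvd_mul_iff_left (a := r ^ (mm - ii)) hr0).mp h2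
      rcases (Nat.Prime.dvd_mul hr).mp hrzw with h | h
      · exact hz h
      · exact hcop hpos h
    have hlt : x.factorization r < mm - ii + 1 := by
      by_contra hcon
      exact hnd ((hr.pow_dvd_iff_le_factorization hx0).mpr (by omega))
    omega

end St17


namespace St17

lemma tot_pp {p i : ℕ} (hp : p.Prime) (hi : 1 ≤ i) :
    (p ^ i).totient = p ^ (i - 1) * (p - 1) :=
  Nat.totient_prime_pow hp (by omega)

lemma cop_two_pp {p i : ℕ} (hpodd : Odd p) : Nat.Coprime 2 (p ^ i) :=
  Nat.Coprime.pow_right i (Nat.coprime_two_left.mpr hpodd)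

lemma tot_2pp {p i : ℕ} (hp : p.Prime) (hpodd : Odd p) (hi : 1 ≤ i) :
    (2 * p ^ i).totient = p ^ (i - 1) * (p - 1) := by
  rw [Nat.totient_mul (cop_two_pp hpodd), Nat.totient_two, one_mul, tot_pp hp hi]

lemma two_dvd_A {p i : ℕ} (hpodd : Odd p) : 2 ∣ p ^ (i - 1) * (p - 1) := by
  have : 2 ∣ p - 1 := by
    obtain ⟨c, hc⟩ := hpodd; omega
  exact Dvd.dvd.mul_left this _

lemma A_pos {p i : ℕ} (hp : p.Prime) : 0 < p ^ (i - 1) * (p - 1) :=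
  Nat.mul_pos (pow_pos hp.pos _) (by have := hp.two_le; omega)

lemma UD_single {M g A : ℕ} (hM2 : 2 ≤ M)
    (hord : orderOf (g : ZMod M) = M.totient) (hAM : M.totient = A) (hA2 : 2 ∣ A) :
    GC0 g 1 M (A / 2) 1 ∪ GC1 g 1 M (A / 2) 1 = UnitsF M ∧
      Disjoint (GC0 g 1 M (A / 2) 1) (GC1 g 1 M (A / 2) 1) := by
  have hg := coprime_of_orderOf_eq_totient hM2 hord
  have hA0 : 0 < A := hAM ▸ Nat.totient_pos.mpr (by omega)
  have h2D : 2 * (A / 2) = A := Nat.mul_div_cancel' hA2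
  refine GC_main hM2 hg (Nat.coprime_one_left M)
    (Nat.div_pos (Nat.le_of_dvd hA0 hA2) two_pos) one_pos ?_ ?_
  · rw [mul_one, h2D, hAM]
  · intro s k s' k' hs hs' hk hk' hEq
    exact hinj_single hg (hord.trans hAM) s k s' k' (by omega) (by omega) hk hk' hEq

lemma UD_pair {M Mp Mq g y : ℕ} (hM : M = Mp * Mq) (hMp2 : 2 ≤ Mp) (hMq2 : 2 ≤ Mq)
    (hcop : Nat.Coprime Mp Mq)
    (hordp : orderOf (g : ZMod Mp) = Mp.totient)
    (hordq : orderOf (g : ZMod Mq) = Mq.totient)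
    (hA2 : 2 ∣ Mp.totient)
    (hyp : (y : ZMod Mp) = (g : ZMod Mp)) (hyq : (y : ZMod Mq) = 1)
    (DD EE : ℕ) (hDD : DD = Nat.lcm Mp.totient Mq.totient / 2)
    (hEE : EE = Nat.gcd Mp.totient Mq.totient) :
    GC0 g y M DD EE ∪ GC1 g y M DD EE = UnitsF M ∧
      Disjoint (GC0 g y M DD EE) (GC1 g y M DD EE) := by
  subst hM hDD hEE
  set A := Mp.totient with hA
  set B := Mq.totient with hB
  have hA0 : 0 < A := Nat.totient_pos.mpr (by omega)
  have hB0 : 0 < B := Nat.totient_pos.mpr (by omega)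
  have hL2 : 2 ∣ Nat.lcm A B := dvd_trans hA2 (Nat.dvd_lcm_left A B)
  have hL0 : 0 < Nat.lcm A B := Nat.pos_of_ne_zero (Nat.lcm_ne_zero hA0.ne' hB0.ne')
  have h2D : 2 * (Nat.lcm A B / 2) = Nat.lcm A B := Nat.mul_div_cancel' hL2
  have hgMp : g.Coprime Mp := coprime_of_orderOf_eq_totient hMp2 hordp
  have hgMq : g.Coprime Mq := coprime_of_orderOf_eq_totient hMq2 hordq
  have hyMp : y.Coprime Mp := by
    rw [← ZMod.isUnit_iff_coprime, hyp]
    exact (ZMod.isUnit_iff_coprime g Mp).mpr hgMp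
  have hyMq : y.Coprime Mq := by
    rw [← ZMod.isUnit_iff_coprime, hyq]; exact isUnit_one
  have hM2 : 2 ≤ Mp * Mq := le_trans hMp2 (Nat.le_mul_of_pos_right Mp (by omega))
  refine GC_main hM2 (hgMp.mul_right hgMq) (hyMp.mul_right hyMq)
    (Nat.div_pos (Nat.le_of_dvd hL0 hL2) two_pos) (Nat.gcd_pos_of_pos_left B hA0) ?_ ?_
  · rw [h2D, mul_comm (Nat.lcm A B) (Nat.gcd A B), Nat.gcd_mul_lcm, ← Nat.totient_mul hcop]
  · intro s k s' k' hs hs' hk hk' hEq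
    exact hinj_PQ (dvd_mul_right Mp Mq) (dvd_mul_left Mq Mp) hgMp hgMq hyp hyq hordp hordq
      s k s' k' (by omega) (by omega) hk hk' hEq

end St17


namespace St17

lemma scaled_union (c : ℕ) (A B : Finset ℕ) : scaled c A ∪ scaled c B = scaled c (A ∪ B) :=
  (Finset.image_union _ _).symm

lemma scaled_disjoint {c : ℕ} (hc : c ≠ 0) {A B : Finset ℕ} (h : Disjoint A B) :
    Disjoint (scaled c A) (scaled c B) :=
  (Finset.disjoint_image (mul_right_injective₀ hc)).mpr h

lemma mem_scaled {c x : ℕ} {A : Finset ℕ} : x ∈ scaled c A ↔ ∃ w ∈ A, x = c * w := by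
  simp [scaled, eq_comm]

lemma pieceUD {p q m n g y : ℕ}
    (hp : p.Prime) (hq : q.Prime) (hpq : p ≠ q) (hpodd : Odd p) (hqodd : Odd q)
    (hgp : ∀ i, 1 ≤ i → i ≤ m → orderOf (g : ZMod (p ^ i)) = Nat.totient (p ^ i))
    (hg2p : ∀ i, 1 ≤ i → i ≤ m → orderOf (g : ZMod (2 * p ^ i)) = Nat.totient (2 * p ^ i))
    (hgq : ∀ j, 1 ≤ j → j ≤ n → orderOf (g : ZMod (q ^ j)) = Nat.totient (q ^ j))
    (hg2q : ∀ j, 1 ≤ j → j ≤ n → orderOf (g : ZMod (2 * q ^ j)) = Nat.totient (2 * q ^ j))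
    (hyg : y ≡ g [MOD 2 * p ^ m]) (hy1 : y ≡ 1 [MOD 2 * q ^ n])
    {t i j : ℕ} (hi : i ≤ m) (hj : j ≤ n) (hij : ¬(i = 0 ∧ j = 0)) (ht : t < 2) :
    piece p q m n g y (0, t, i, j) ∪ piece p q m n g y (1, t, i, j)
      = scaled (2 ^ t * (p ^ (m - i) * q ^ (n - j)))
          (UnitsF (2 ^ (1 - t) * (p ^ i * q ^ j))) ∧
      Disjoint (piece p q m n g y (0, t, i, j)) (piece p q m n g y (1, t, i, j)) := by
  have hppos := hp.pos
  have hqpos := hq.pos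
  have hppow : 0 < p ^ i := pow_pos hppos i
  have hqpow : 0 < q ^ j := pow_pos hqpos j
  have hc0 : (0:ℕ) < p ^ (m - i) * q ^ (n - j) :=
    Nat.mul_pos (pow_pos hppos _) (pow_pos hqpos _)
  rcases Nat.eq_zero_or_pos i with rfl | hi1
  · -- i = 0, j ≥ 1
    have hj1 : 1 ≤ j := by omega
    have hyqj : (y : ZMod (q ^ j)) = 1 := by
      have h := hy1.of_dvd (Dvd.dvd.mul_left (pow_dvd_pow q hj) 2)
      have h2 := (ZMod.natCast_eq_natCast_iff _ _ _).mpr h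
      simpa using h2
    have hy2qj : (y : ZMod (2 * q ^ j)) = 1 := by
      have h := hy1.of_dvd (mul_dvd_mul_left 2 (pow_dvd_pow q hj))
      have h2 := (ZMod.natCast_eq_natCast_iff _ _ _).mpr h
      simpa using h2
    have hq2 : 2 ≤ q ^ j := by
      calc 2 ≤ q := hq.two_le
      _ = q ^ 1 := (pow_one q).symm
      _ ≤ q ^ j := Nat.pow_le_pow_right (by omega) hj1
    interval_cases t
    · -- t = 0 : modulus 2 q^j
      have hUD := UD_single (M := 2 * q ^ j) (A := q ^ (j-1) * (q-1)) (by omega)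
        (hg2q j hj1 hj) (tot_2pp hq hqodd hj1) (two_dvd_A hqodd)
      have e0 : piece p q m n g y (0, 0, 0, j) = scaled (p ^ m * q ^ (n - j)) (D2Q q g 0 j) := by
        simp only [piece]
        first | rfl | (split_ifs <;> first | rfl | omega | tauto)
      have e1 : piece p q m n g y (1, 0, 0, j) = scaled (p ^ m * q ^ (n - j)) (D2Q q g 1 j) := by
        simp only [piece]
        first | rfl | (split_ifs <;> first | rfl | omega | tauto)
      rw [e0, e1]
      constructor
      · rw [scaled_union]
        have : D2Q q g 0 j ∪ D2Q q g 1 j = UnitsF (2 * q ^ j) := by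
          simpa [D2Q, GC] using hUD.1
        rw [this]
        norm_num
      · exact scaled_disjoint hc0.ne' (by simpa [D2Q, GC] using hUD.2)
    · -- t = 1 : modulus q^j
      have hUD := UD_single (M := q ^ j) (A := q ^ (j-1) * (q-1)) hq2
        (hgq j hj1 hj) (tot_pp hq hj1) (two_dvd_A hqodd)
      have e0 : piece p q m n g y (0, 1, 0, j)
          = scaled (2 * (p ^ m * q ^ (n - j))) (DQ q g 0 j) := by
        simp only [piece]
        first | rfl | (split_ifs <;> first | rfl | omega | tauto)
      have e1 : piece p q m n g y (1, 1, 0, j)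
          = scaled (2 * (p ^ m * q ^ (n - j))) (DQ q g 1 j) := by
        simp only [piece]
        first | rfl | (split_ifs <;> first | rfl | omega | tauto)
      rw [e0, e1]
      constructor
      · rw [scaled_union]
        have : DQ q g 0 j ∪ DQ q g 1 j = UnitsF (q ^ j) := by
          simpa [DQ, GC] using hUD.1
        rw [this]
        norm_num [mul_comm]
      · exact scaled_disjoint (Nat.mul_pos two_pos (Nat.mul_pos (pow_pos hppos m) (pow_pos hqpos (n-j)))).ne' (by simpa [DQ, GC] using hUD.2)
  · rcases Nat.eq_zero_or_pos j with rfl | hj1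
    · -- j = 0, i ≥ 1
      have hypi : (y : ZMod (p ^ i)) = (g : ZMod (p ^ i)) := by
        have h := hyg.of_dvd (Dvd.dvd.mul_left (pow_dvd_pow p hi) 2)
        exact (ZMod.natCast_eq_natCast_iff _ _ _).mpr h
      have hy2pi : (y : ZMod (2 * p ^ i)) = (g : ZMod (2 * p ^ i)) := by
        have h := hyg.of_dvd (mul_dvd_mul_left 2 (pow_dvd_pow p hi))
        exact (ZMod.natCast_eq_natCast_iff _ _ _).mpr h
      have hp2 : 2 ≤ p ^ i := by
        calc 2 ≤ p := hp.two_le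
        _ = p ^ 1 := (pow_one p).symm
        _ ≤ p ^ i := Nat.pow_le_pow_right (by omega) hi1
      interval_cases t
      · have hUD := UD_single (M := 2 * p ^ i) (A := p ^ (i-1) * (p-1)) (by omega)
          (hg2p i hi1 hi) (tot_2pp hp hpodd hi1) (two_dvd_A hpodd)
        have e0 : piece p q m n g y (0, 0, i, 0)
            = scaled (p ^ (m - i) * q ^ n) (D2P p g 0 i) := by
          simp only [piece]
          first | rfl | (split_ifs <;> first | rfl | omega | tauto)
        have e1 : piece p q m n g y (1, 0, i, 0)
            = scaled (p ^ (m - i) * q ^ n) (D2P p g 1 i) := by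
          simp only [piece]
          first | rfl | (split_ifs <;> first | rfl | omega | tauto)
        rw [e0, e1]
        constructor
        · rw [scaled_union]
          have : D2P p g 0 i ∪ D2P p g 1 i = UnitsF (2 * p ^ i) := by
            simpa [D2P, GC] using hUD.1
          rw [this]
          norm_num
        · exact scaled_disjoint hc0.ne' (by simpa [D2P, GC] using hUD.2)
      · have hUD := UD_single (M := p ^ i) (A := p ^ (i-1) * (p-1)) hp2
          (hgp i hi1 hi) (tot_pp hp hi1) (two_dvd_A hpodd)
        have e0 : piece p q m n g y (0, 1, i, 0)
            = scaled (2 * (p ^ (m - i) * q ^ n)) (DP p g 0 i) := by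
          simp only [piece]
          first | rfl | (split_ifs <;> first | rfl | omega | tauto)
        have e1 : piece p q m n g y (1, 1, i, 0)
            = scaled (2 * (p ^ (m - i) * q ^ n)) (DP p g 1 i) := by
          simp only [piece]
          first | rfl | (split_ifs <;> first | rfl | omega | tauto)
        rw [e0, e1]
        constructor
        · rw [scaled_union]
          have : DP p g 0 i ∪ DP p g 1 i = UnitsF (p ^ i) := by
            simpa [DP, GC] using hUD.1
          rw [this]
          norm_num [mul_comm]
        · exact scaled_disjoint (Nat.mul_pos two_pos (Nat.mul_pos (pow_pos hppos (m-i)) (pow_pos hqpos n))).ne' (by simpa [DP, GC] using hUD.2)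
    · -- i ≥ 1, j ≥ 1
      have hypi : (y : ZMod (p ^ i)) = (g : ZMod (p ^ i)) := by
        have h := hyg.of_dvd (Dvd.dvd.mul_left (pow_dvd_pow p hi) 2)
        exact (ZMod.natCast_eq_natCast_iff _ _ _).mpr h
      have hy2pi : (y : ZMod (2 * p ^ i)) = (g : ZMod (2 * p ^ i)) := by
        have h := hyg.of_dvd (mul_dvd_mul_left 2 (pow_dvd_pow p hi))
        exact (ZMod.natCast_eq_natCast_iff _ _ _).mpr h
      have hyqj : (y : ZMod (q ^ j)) = 1 := by
        have h := hy1.of_dvd (Dvd.dvd.mul_left (pow_dvd_pow q hj) 2)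
        have h2 := (ZMod.natCast_eq_natCast_iff _ _ _).mpr h
        simpa using h2
      have hp2 : 2 ≤ p ^ i := by
        calc 2 ≤ p := hp.two_le
        _ = p ^ 1 := (pow_one p).symm
        _ ≤ p ^ i := Nat.pow_le_pow_right (by omega) hi1
      have hq2 : 2 ≤ q ^ j := by
        calc 2 ≤ q := hq.two_le
        _ = q ^ 1 := (pow_one q).symm
        _ ≤ q ^ j := Nat.pow_le_pow_right (by omega) hj1
      have hcoppq : Nat.Coprime (p ^ i) (q ^ j) :=
        Nat.Coprime.pow _ _ ((Nat.coprime_primes hp hq).mpr hpq)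
      interval_cases t
      · -- t = 0 : modulus 2 p^i q^j ; Mp = 2 p^i, Mq = q^j
        have hcop2 : Nat.Coprime (2 * p ^ i) (q ^ j) :=
          Nat.Coprime.mul (Nat.Coprime.pow_right j (Nat.coprime_two_left.mpr hqodd)) hcoppq
        have hA2 : 2 ∣ (2 * p ^ i).totient := by
          rw [tot_2pp hp hpodd hi1]; exact two_dvd_A hpodd
        have hDD : dij p q i j / 2 = Nat.lcm (2 * p ^ i).totient (q ^ j).totient / 2 := by
          rw [tot_2pp hp hpodd hi1, tot_pp hq hj1]; rfl
        have hEE : eij p q i j = Nat.gcd (2 * p ^ i).totient (q ^ j).totient := by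
          rw [tot_2pp hp hpodd hi1, tot_pp hq hj1]; rfl
        have hUD := UD_pair (M := 2 * (p ^ i * q ^ j)) (Mp := 2 * p ^ i) (Mq := q ^ j)
          (by ring) (by omega) hq2 hcop2 (hg2p i hi1 hi) (hgq j hj1 hj) hA2
          hy2pi hyqj (dij p q i j / 2) (eij p q i j) hDD hEE
        have e0 : piece p q m n g y (0, 0, i, j)
            = scaled (p ^ (m - i) * q ^ (n - j)) (D2PQ p q g y 0 i j) := by
          simp only [piece]
          first | rfl | (split_ifs <;> first | rfl | omega | tauto)
        have e1 : piece p q m n g y (1, 0, i, j)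
            = scaled (p ^ (m - i) * q ^ (n - j)) (D2PQ p q g y 1 i j) := by
          simp only [piece]
          first | rfl | (split_ifs <;> first | rfl | omega | tauto)
        rw [e0, e1]
        constructor
        · rw [scaled_union]
          have : D2PQ p q g y 0 i j ∪ D2PQ p q g y 1 i j = UnitsF (2 * (p ^ i * q ^ j)) := by
            simpa [D2PQ, GC] using hUD.1
          rw [this]
          norm_num
        · exact scaled_disjoint hc0.ne' (by simpa [D2PQ, GC] using hUD.2)
      · -- t = 1 : modulus p^i q^j ; Mp = p^i, Mq = q^j
        have hA2 : 2 ∣ (p ^ i).totient := by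
          rw [tot_pp hp hi1]; exact two_dvd_A hpodd
        have hDD : dij p q i j / 2 = Nat.lcm (p ^ i).totient (q ^ j).totient / 2 := by
          rw [tot_pp hp hi1, tot_pp hq hj1]; rfl
        have hEE : eij p q i j = Nat.gcd (p ^ i).totient (q ^ j).totient := by
          rw [tot_pp hp hi1, tot_pp hq hj1]; rfl
        have hUD := UD_pair (M := p ^ i * q ^ j) (Mp := p ^ i) (Mq := q ^ j)
          rfl hp2 hq2 hcoppq (hgp i hi1 hi) (hgq j hj1 hj) hA2
          hypi hyqj (dij p q i j / 2) (eij p q i j) hDD hEE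
        have e0 : piece p q m n g y (0, 1, i, j)
            = scaled (2 * (p ^ (m - i) * q ^ (n - j))) (DPQ p q g y 0 i j) := by
          simp only [piece]
          first | rfl | (split_ifs <;> first | rfl | omega | tauto)
        have e1 : piece p q m n g y (1, 1, i, j)
            = scaled (2 * (p ^ (m - i) * q ^ (n - j))) (DPQ p q g y 1 i j) := by
          simp only [piece]
          first | rfl | (split_ifs <;> first | rfl | omega | tauto)
        rw [e0, e1]
        constructor
        · rw [scaled_union]
          have : DPQ p q g y 0 i j ∪ DPQ p q g y 1 i j = UnitsF (p ^ i * q ^ j) := by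
            simpa [DPQ, GC] using hUD.1
          rw [this]
          norm_num [mul_comm]
        · exact scaled_disjoint (Nat.mul_pos two_pos hc0).ne' (by simpa [DPQ, GC] using hUD.2)

end St17


theorem statement17
    (p q m n g y : ℕ)
    (hp : p.Prime) (hq : q.Prime) (hpq : p ≠ q) (hpodd : Odd p) (hqodd : Odd q)
    (hm : 1 ≤ m) (hn : 1 ≤ n) (hgodd : Odd g)
    (hgp : ∀ i, 1 ≤ i → i ≤ m → orderOf (g : ZMod (p ^ i)) = Nat.totient (p ^ i))
    (hg2p : ∀ i, 1 ≤ i → i ≤ m → orderOf (g : ZMod (2 * p ^ i)) = Nat.totient (2 * p ^ i))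
    (hgq : ∀ j, 1 ≤ j → j ≤ n → orderOf (g : ZMod (q ^ j)) = Nat.totient (q ^ j))
    (hg2q : ∀ j, 1 ≤ j → j ≤ n → orderOf (g : ZMod (2 * q ^ j)) = Nat.totient (2 * q ^ j))
    (hylt : y < 2 * (p ^ m * q ^ n))
    (hyg : y ≡ g [MOD 2 * p ^ m]) (hy1 : y ≡ 1 [MOD 2 * q ^ n])
    : (Finset.range (2 * (p ^ m * q ^ n))
        = insert 0 (insert (p ^ m * q ^ n) ((pieceIdx m n).biUnion (piece p q m n g y)))) ∧
      (∀ x ∈ pieceIdx m n, ∀ x' ∈ pieceIdx m n, x ≠ x' →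
        Disjoint (piece p q m n g y x) (piece p q m n g y x')) ∧
      (∀ x ∈ pieceIdx m n,
        0 ∉ piece p q m n g y x ∧ p ^ m * q ^ n ∉ piece p q m n g y x) := by
  have hp3 : 3 ≤ p := by obtain ⟨c, hc⟩ := hpodd; have := hp.two_le; omega
  have hq3 : 3 ≤ q := by obtain ⟨c, hc⟩ := hqodd; have := hq.two_le; omega
  have hN0 : 0 < p ^ m * q ^ n := Nat.mul_pos (pow_pos hp.pos m) (pow_pos hq.pos n)
  have hNodd : Odd (p ^ m * q ^ n) := (hpodd.pow).mul (hqodd.pow)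
  have hUD := fun {t i j : ℕ} (hi : i ≤ m) (hj : j ≤ n) (hij : ¬(i = 0 ∧ j = 0))
    (ht : t < 2) =>
    St17.pieceUD hp hq hpq hpodd hqodd hgp hg2p hgq hg2q hyg hy1 hi hj hij ht
  have hmemIdx : ∀ h t i j : ℕ, (h, t, i, j) ∈ pieceIdx m n ↔
      (h < 2 ∧ t < 2 ∧ i ≤ m ∧ j ≤ n ∧ ¬(i = 0 ∧ j = 0)) := by
    intro h t i j
    simp only [pieceIdx, Finset.mem_product, Finset.mem_erase, Finset.mem_range]
    constructor
    · rintro ⟨h1, h2, h3, h4⟩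
      refine ⟨h1, h2, by omega, by omega, ?_⟩
      rintro ⟨rfl, rfl⟩
      exact h3 rfl
    · rintro ⟨h1, h2, h3, h4, h5⟩
      refine ⟨h1, h2, ?_, by omega, by omega⟩
      intro hcon
      rw [Prod.ext_iff] at hcon
      exact h5 ⟨hcon.1, hcon.2⟩
  have hK1 : ∀ {t i j : ℕ}, ¬(i = 0 ∧ j = 0) → 2 ^ (1 - t) * (p ^ i * q ^ j) ≠ 1 := by
    intro t i j hij hKeq
    have hpq1 : p ^ i * q ^ j = 1 :=
      Nat.dvd_one.mp (by rw [← hKeq]; exact dvd_mul_left _ _)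
    have hpi : p ^ i = 1 := Nat.dvd_one.mp (by rw [← hpq1]; exact dvd_mul_right _ _)
    have hqj : q ^ j = 1 := Nat.dvd_one.mp (by rw [← hpq1]; exact dvd_mul_left _ _)
    have hi0 : i = 0 := by
      by_contra hcon
      have := Nat.one_lt_pow hcon (by omega : 1 < p)
      omega
    have hj0 : j = 0 := by
      by_contra hcon
      have := Nat.one_lt_pow hcon (by omega : 1 < q)
      omega
    exact hij ⟨hi0, hj0⟩
  have hprod : ∀ t i j : ℕ, t < 2 → i ≤ m → j ≤ n →
      2 ^ t * (p ^ (m - i) * q ^ (n - j)) * (2 ^ (1 - t) * (p ^ i * q ^ j))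
        = 2 * (p ^ m * q ^ n) := by
    intro t i j ht hi hj
    have h1 : p ^ (m - i) * p ^ i = p ^ m := by rw [← pow_add]; congr 1; omega
    have h2 : q ^ (n - j) * q ^ j = q ^ n := by rw [← pow_add]; congr 1; omega
    have h3 : (2:ℕ) ^ t * 2 ^ (1 - t) = 2 := by interval_cases t <;> norm_num
    calc 2 ^ t * (p ^ (m - i) * q ^ (n - j)) * (2 ^ (1 - t) * (p ^ i * q ^ j))
        = (2 ^ t * 2 ^ (1 - t)) * ((p ^ (m - i) * p ^ i) * (q ^ (n - j) * q ^ j)) := by ring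
      _ = 2 * (p ^ m * q ^ n) := by rw [h1, h2, h3]
  have hKey : ∀ h t i j x : ℕ, h < 2 → t < 2 → i ≤ m → j ≤ n → ¬(i = 0 ∧ j = 0) →
      x ∈ piece p q m n g y (h, t, i, j) →
      ∃ w, w ≠ 0 ∧ w < 2 ^ (1 - t) * (p ^ i * q ^ j) ∧
        Nat.Coprime (2 ^ (1 - t) * (p ^ i * q ^ j)) w ∧
        x = 2 ^ t * (p ^ (m - i) * q ^ (n - j)) * w := by
    intro h t i j x hh ht hi hj hij hx
    have hU := (hUD hi hj hij ht).1
    have hxs : x ∈ scaled (2 ^ t * (p ^ (m - i) * q ^ (n - j)))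
        (St17.UnitsF (2 ^ (1 - t) * (p ^ i * q ^ j))) := by
      rw [← hU]
      interval_cases h
      · exact Finset.mem_union_left _ hx
      · exact Finset.mem_union_right _ hx
    obtain ⟨w, hw, hxe⟩ := St17.mem_scaled.mp hxs
    rw [St17.mem_unitsF] at hw
    refine ⟨w, ?_, hw.1, hw.2, hxe⟩
    rintro rfl
    have := hw.2
    rw [Nat.coprime_zero_right] at this
    exact hK1 hij this
  have hval : ∀ t i j w : ℕ, t < 2 → i ≤ m → j ≤ n → w ≠ 0 →
      Nat.Coprime (2 ^ (1 - t) * (p ^ i * q ^ j)) w →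
      min ((2 ^ t * (p ^ (m - i) * q ^ (n - j)) * w).factorization p) m = m - i ∧
      min ((2 ^ t * (p ^ (m - i) * q ^ (n - j)) * w).factorization q) n = n - j := by
    intro t i j w ht hi hj hw0 hcop
    constructor
    · refine St17.val_min hp hi (z := 2 ^ t * q ^ (n - j)) (by ring) ?_ ?_ hw0 ?_
      · intro hd
        rcases (Nat.Prime.dvd_mul hp).mp hd with hd2 | hdq
        · have := Nat.le_of_dvd two_pos (hp.dvd_of_dvd_pow hd2); omega
        · exact hpq ((Nat.prime_dvd_prime_iff_eq hp hq).mp (hp.dvd_of_dvd_pow hdq))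
      · exact (Nat.mul_pos (pow_pos two_pos _) (pow_pos hq.pos _)).ne'
      · intro hi1 hpw
        have hpK : p ∣ 2 ^ (1 - t) * (p ^ i * q ^ j) :=
          dvd_trans (dvd_pow_self p (by omega : i ≠ 0))
            (dvd_trans (dvd_mul_right _ _) (dvd_mul_left _ _))
        exact (hp.coprime_iff_not_dvd.mp (Nat.Coprime.coprime_dvd_left hpK hcop)) hpw
    · refine St17.val_min hq hj (z := 2 ^ t * p ^ (m - i)) (by ring) ?_ ?_ hw0 ?_
      · intro hd
        rcases (Nat.Prime.dvd_mul hq).mp hd with hd2 | hdp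
        · have := Nat.le_of_dvd two_pos (hq.dvd_of_dvd_pow hd2); omega
        · exact hpq ((Nat.prime_dvd_prime_iff_eq hq hp).mp (hq.dvd_of_dvd_pow hdp)).symm
      · exact (Nat.mul_pos (pow_pos two_pos _) (pow_pos hp.pos _)).ne'
      · intro hj1 hqw
        have hqK : q ∣ 2 ^ (1 - t) * (p ^ i * q ^ j) :=
          dvd_trans (dvd_pow_self q (by omega : j ≠ 0))
            (dvd_trans (dvd_mul_left _ _) (dvd_mul_left _ _))
        exact (hq.coprime_iff_not_dvd.mp (Nat.Coprime.coprime_dvd_left hqK hcop)) hqw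
  have hpar : ∀ t i j w : ℕ, t < 2 → Nat.Coprime (2 ^ (1 - t) * (p ^ i * q ^ j)) w →
      (2 ∣ 2 ^ t * (p ^ (m - i) * q ^ (n - j)) * w ↔ t = 1) := by
    intro t i j w ht hcop
    interval_cases t
    · simp only [pow_zero, one_mul, pow_one] at hcop ⊢
      constructor
      · intro h2
        exfalso
        have hcodd : Odd (p ^ (m - i) * q ^ (n - j)) := (hpodd.pow).mul (hqodd.pow)
        have hwodd : Odd w := Nat.coprime_two_left.mp
          (Nat.Coprime.coprime_dvd_left (dvd_mul_right 2 _) hcop)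
        obtain ⟨c, hc⟩ := hcodd.mul hwodd
        omega
      · omega
    · simp only [pow_one]
      constructor
      · intro _; trivial
      · intro _
        exact Dvd.dvd.mul_right (dvd_mul_right 2 _) w
  refine ⟨?_, ?_, ?_⟩
  · -- partition equality
    ext x
    simp only [Finset.mem_range, Finset.mem_insert, Finset.mem_biUnion]
    constructor
    · intro hxlt
      rcases eq_or_ne x 0 with rfl | hx0
      · exact Or.inl rfl
      rcases eq_or_ne x (p ^ m * q ^ n) with rfl | hxN
      · exact Or.inr (Or.inl rfl)
      refine Or.inr (Or.inr ?_)
      rcases Nat.even_or_odd x with hev | hod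
      · -- even : t = 1
        obtain ⟨x', hx'⟩ := hev
        have hx2 : x = 2 * x' := by omega
        have hx'0 : x' ≠ 0 := by omega
        have hx'N : ¬ p ^ m * q ^ n ∣ x' := by
          intro hd
          have := Nat.le_of_dvd (by omega) hd
          omega
        have hx'lt : x' < 1 * (p ^ m * q ^ n) := by omega
        obtain ⟨i, j, w, hi, hj, hij, hdec, hwlt, hwcop, hwdvd⟩ :=
          St17.classify_core hp hq hpq hx'0 hx'lt hx'N
        have hU := (hUD hi hj hij (by omega : (1:ℕ) < 2)).1
        have hxmem : x ∈ scaled (2 ^ 1 * (p ^ (m - i) * q ^ (n - j)))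
            (St17.UnitsF (2 ^ (1 - 1) * (p ^ i * q ^ j))) := by
          rw [St17.mem_scaled]
          refine ⟨w, ?_, ?_⟩
          · rw [St17.mem_unitsF]
            refine ⟨by simpa using hwlt, ?_⟩
            simpa using hwcop.symm
          · rw [hx2, hdec]; ring
        rw [← hU] at hxmem
        rcases Finset.mem_union.mp hxmem with hmem | hmem
        · exact ⟨(0, 1, i, j), (hmemIdx 0 1 i j).mpr ⟨by omega, by omega, hi, hj, hij⟩, hmem⟩
        · exact ⟨(1, 1, i, j), (hmemIdx 1 1 i j).mpr ⟨by omega, by omega, hi, hj, hij⟩, hmem⟩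
      · -- odd : t = 0
        have hxN' : ¬ p ^ m * q ^ n ∣ x := by
          intro hd
          obtain ⟨c, hc⟩ := hd
          have h1 : 0 < c := by
            rcases Nat.eq_zero_or_pos c with rfl | hcpos
            · rw [Nat.mul_zero] at hc; exact absurd hc hx0
            · exact hcpos
          have h2 : c < 2 := by
            by_contra hcon
            push_neg at hcon
            have : 2 * (p ^ m * q ^ n) ≤ x := by
              rw [hc]; calc 2 * (p ^ m * q ^ n) = (p ^ m * q ^ n) * 2 := by ring
                _ ≤ (p ^ m * q ^ n) * c := Nat.mul_le_mul_left _ hcon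
            omega
          interval_cases c
          · exact hxN (by omega)
        have hxlt2 : x < 2 * (p ^ m * q ^ n) := hxlt
        obtain ⟨i, j, w, hi, hj, hij, hdec, hwlt, hwcop, hwdvd⟩ :=
          St17.classify_core hp hq hpq hx0 hxlt2 hxN'
        have hwodd : Odd w := by
          rcases Nat.even_or_odd w with hwe | hwo
          · exfalso
            obtain ⟨c, hc⟩ := hwe
            obtain ⟨d, hd⟩ := hwdvd
            have h2x : x = 2 * (c * d) := by rw [hd, hc]; ring
            rcases hod with ⟨e, he⟩
            omega
          · exact hwo
        have hU := (hUD hi hj hij (by omega : (0:ℕ) < 2)).1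
        have hxmem : x ∈ scaled (2 ^ 0 * (p ^ (m - i) * q ^ (n - j)))
            (St17.UnitsF (2 ^ (1 - 0) * (p ^ i * q ^ j))) := by
          rw [St17.mem_scaled]
          refine ⟨w, ?_, ?_⟩
          · rw [St17.mem_unitsF]
            constructor
            · simpa using hwlt
            · have h2w : Nat.Coprime 2 w := Nat.coprime_two_left.mpr hwodd
              have := Nat.Coprime.mul h2w hwcop.symm
              simpa using this
          · rw [hdec]; ring
        rw [← hU] at hxmem
        rcases Finset.mem_union.mp hxmem with hmem | hmem
        · exact ⟨(0, 0, i, j), (hmemIdx 0 0 i j).mpr ⟨by omega, by omega, hi, hj, hij⟩, hmem⟩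
        · exact ⟨(1, 0, i, j), (hmemIdx 1 0 i j).mpr ⟨by omega, by omega, hi, hj, hij⟩, hmem⟩
    · rintro (rfl | rfl | ⟨⟨h, t, i, j⟩, hidx, hxp⟩)
      · omega
      · omega
      · obtain ⟨hh, ht, hi, hj, hij⟩ := (hmemIdx h t i j).mp hidx
        obtain ⟨w, hw0, hwlt, hwcop, hdec⟩ := hKey h t i j _ hh ht hi hj hij hxp
        rw [hdec]
        calc 2 ^ t * (p ^ (m - i) * q ^ (n - j)) * w
            < 2 ^ t * (p ^ (m - i) * q ^ (n - j)) * (2 ^ (1 - t) * (p ^ i * q ^ j)) := by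
              have hA0 : 0 < 2 ^ t * (p ^ (m - i) * q ^ (n - j)) :=
                Nat.mul_pos (pow_pos two_pos t)
                  (Nat.mul_pos (pow_pos hp.pos _) (pow_pos hq.pos _))
              exact mul_lt_mul_of_pos_left hwlt hA0
          _ = 2 * (p ^ m * q ^ n) := hprod t i j ht hi hj
  · -- pairwise disjoint
    rintro ⟨h, t, i, j⟩ hidx ⟨h', t', i', j'⟩ hidx' hne
    obtain ⟨hh, ht, hi, hj, hij⟩ := (hmemIdx h t i j).mp hidx
    obtain ⟨hh', ht', hi', hj', hij'⟩ := (hmemIdx h' t' i' j').mp hidx'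
    rw [Finset.disjoint_left]
    intro a ha ha'
    obtain ⟨w, hw0, hwlt, hwcop, hdec⟩ := hKey h t i j _ hh ht hi hj hij ha
    obtain ⟨w', hw0', hwlt', hwcop', hdec'⟩ := hKey h' t' i' j' _ hh' ht' hi' hj' hij' ha'
    have htt : t = t' := by
      have e1 := hpar t i j w ht hwcop
      have e2 := hpar t' i' j' w' ht' hwcop'
      rw [← hdec] at e1
      rw [← hdec'] at e2
      rcases Nat.even_or_odd a with ⟨c, hc⟩ | ⟨c, hc⟩
      · have d1 : t = 1 := e1.mp ⟨c, by omega⟩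
        have d2 : t' = 1 := e2.mp ⟨c, by omega⟩
        omega
      · have d1 : t ≠ 1 := fun hteq => by
          obtain ⟨d, hd⟩ := e1.mpr hteq; omega
        have d2 : t' ≠ 1 := fun hteq => by
          obtain ⟨d, hd⟩ := e2.mpr hteq; omega
        omega
    have hii : i = i' ∧ j = j' := by
      have v1 := hval t i j w ht hi hj hw0 hwcop
      have v2 := hval t' i' j' w' ht' hi' hj' hw0' hwcop'
      rw [← hdec] at v1
      rw [← hdec'] at v2
      constructor
      · have := v1.1.symm.trans v2.1
        omega
      · have := v1.2.symm.trans v2.2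
        omega
    obtain ⟨rfl, rfl⟩ := hii
    subst htt
    have hhh : h ≠ h' := by
      intro hcon
      exact hne (by rw [hcon])
    have hD := (hUD hi hj hij ht).2
    interval_cases h <;> interval_cases h'
    · omega
    · exact Finset.disjoint_left.mp hD ha ha'
    · exact Finset.disjoint_left.mp hD ha' ha
    · omega
  · -- 0 and N not in pieces
    rintro ⟨h, t, i, j⟩ hidx
    obtain ⟨hh, ht, hi, hj, hij⟩ := (hmemIdx h t i j).mp hidx
    constructor
    · intro hx
      obtain ⟨w, hw0, hwlt, hwcop, hdec⟩ := hKey h t i j _ hh ht hi hj hij hx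
      have : (0:ℕ) < 2 ^ t * (p ^ (m - i) * q ^ (n - j)) * w := by
        apply Nat.mul_pos
        · exact Nat.mul_pos (pow_pos two_pos t)
            (Nat.mul_pos (pow_pos hp.pos _) (pow_pos hq.pos _))
        · omega
      omega
    · intro hx
      obtain ⟨w, hw0, hwlt, hwcop, hdec⟩ := hKey h t i j _ hh ht hi hj hij hx
      have hpar2 := hpar t i j w ht hwcop
      rw [← hdec] at hpar2
      rcases Nat.eq_zero_or_pos t with rfl | ht1
      · -- t = 0 : N = c * w with w coprime to 2c'
        simp only [pow_zero, one_mul, pow_one] at hdec hwcop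
        -- N = p^m q^n = (p^{m-i} q^{n-j}) * (p^i q^j)
        have hNsplit : p ^ m * q ^ n
            = p ^ (m - i) * q ^ (n - j) * (p ^ i * q ^ j) := by
          have h1 : p ^ (m - i) * p ^ i = p ^ m := by rw [← pow_add]; congr 1; omega
          have h2 : q ^ (n - j) * q ^ j = q ^ n := by rw [← pow_add]; congr 1; omega
          rw [← h1, ← h2]; ring
        rw [hNsplit] at hdec
        have hc0' : 0 < p ^ (m - i) * q ^ (n - j) :=
          Nat.mul_pos (pow_pos hp.pos _) (pow_pos hq.pos _)
        have hweq : w = p ^ i * q ^ j :=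
          (Nat.eq_of_mul_eq_mul_left hc0' hdec).symm
        subst hweq
        have hKK : Nat.Coprime (p ^ i * q ^ j) (p ^ i * q ^ j) :=
          Nat.Coprime.coprime_dvd_left (dvd_mul_left _ 2) hwcop
        rw [Nat.Coprime, Nat.gcd_self] at hKK
        have hpi : p ^ i = 1 := Nat.dvd_one.mp (by rw [← hKK]; exact dvd_mul_right _ _)
        have hqj : q ^ j = 1 := Nat.dvd_one.mp (by rw [← hKK]; exact dvd_mul_left _ _)
        have hi0 : i = 0 := by
          by_contra hcon
          have := Nat.one_lt_pow hcon (by omega : 1 < p)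
          omega
        have hj0 : j = 0 := by
          by_contra hcon
          have := Nat.one_lt_pow hcon (by omega : 1 < q)
          omega
        exact hij ⟨hi0, hj0⟩
      · -- t = 1 : N even, contradiction
        have ht1' : t = 1 := by omega
        have : (2:ℕ) ∣ p ^ m * q ^ n := hpar2.mpr ht1'
        obtain ⟨c, hc⟩ := hNodd
        obtain ⟨d, hd⟩ := this
        omega

end
end

section
/- For all 1 ≤ i ≤ m and 1 ≤ j ≤ n, the group of units Z_{p^i q^j}^* is the disjoint union of D_0^{(p^i q^j)} and D_1^{(p^i q^j)}, and the group of units Z_{2p^i q^j}^* is the disjoint union of D_0^{(2p^i q^j)} and D_1^{(2p^i q^j)}. -/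
/-!
Modulo `p^i` the element `y` acts as `g` and modulo `q^j` as `1`, so for `N = p^i q^j` or
`2 p^i q^j` the residue `g^s y^k mod N` determines `s + k` modulo `A = ord_{p^i} g` and `s`
modulo `B = ord_{q^j} g`. For `s < lcm(A, B)` and `k < gcd(A, B)` this pins down `(s, k)`, so these
products are `lcm(A, B) · gcd(A, B) = A B = φ(N)` distinct units, i.e. all of them. `D_0` and
`D_1` collect those with `s` even and odd respectively, which works because `lcm(A, B)` is even.
-/

open Finset Polynomial

noncomputable section

def powMulPowMod (g y N : ℕ) (sk : ℕ × ℕ) : ℕ := g ^ sk.1 * y ^ sk.2 % N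

theorem eq_and_eq_of_add_modEq_of_modEq {A B s s' k k' : ℕ}
    (hs : s < Nat.lcm A B) (hs' : s' < Nat.lcm A B)
    (hk : k < Nat.gcd A B) (hk' : k' < Nat.gcd A B)
    (hA : s + k ≡ s' + k' [MOD A]) (hB : s ≡ s' [MOD B]) : s = s' ∧ k = k' := by
  obtain rfl : k = k' :=
    ((hB.of_dvd (Nat.gcd_dvd_right A B)).add_left_cancel
      (hA.of_dvd (Nat.gcd_dvd_left A B))).eq_of_lt_of_lt hk hk'
  exact ⟨(Nat.mod_lcm (hA.add_right_cancel' k) hB).eq_of_lt_of_lt hs hs', rfl⟩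

theorem injOn_powMulPowMod {N P Q g y : ℕ} (hP : P ∣ N) (hQ : Q ∣ N)
    (hyP : (y : ZMod P) = g) (hyQ : (y : ZMod Q) = 1) :
    Set.InjOn (powMulPowMod g y N)
      (range (Nat.lcm (orderOf (g : ZMod P)) (orderOf (g : ZMod Q))) ×ˢ
        range (Nat.gcd (orderOf (g : ZMod P)) (orderOf (g : ZMod Q))) : Finset (ℕ × ℕ)) := by
  rintro ⟨s, k⟩ hsk ⟨s', k'⟩ hsk' h
  simp only [mem_coe, mem_product, mem_range, powMulPowMod] at hsk hsk' h
  obtain ⟨hA, hB⟩ : orderOf (g : ZMod P) ≠ 0 ∧ orderOf (g : ZMod Q) ≠ 0 :=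
    not_or.mp (Nat.lcm_eq_zero_iff.not.mp (by omega))
  have hN : ((g : ZMod N) ^ s * (y : ZMod N) ^ k) = (g : ZMod N) ^ s' * (y : ZMod N) ^ k' := by
    exact_mod_cast (ZMod.natCast_eq_natCast_iff' _ _ N).mpr h
  have hPeq : (g : ZMod P) ^ (s + k) = (g : ZMod P) ^ (s' + k') := by
    simpa only [map_mul, map_pow, map_natCast, hyP, ← pow_add] using
      congrArg (ZMod.castHom hP (ZMod P)) hN
  have hQeq : (g : ZMod Q) ^ s = (g : ZMod Q) ^ s' := by
    simpa only [map_mul, map_pow, map_natCast, hyQ, one_pow, mul_one] using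
      congrArg (ZMod.castHom hQ (ZMod Q)) hN
  obtain ⟨rfl, rfl⟩ := eq_and_eq_of_add_modEq_of_modEq hsk.1 hsk'.1 hsk.2 hsk'.2
    ((orderOf_pos_iff.mp (Nat.pos_of_ne_zero hA)).pow_eq_pow_iff_modEq.mp hPeq)
    ((orderOf_pos_iff.mp (Nat.pos_of_ne_zero hB)).pow_eq_pow_iff_modEq.mp hQeq)
  rfl

theorem image_powMulPowMod_eq_filter_coprime {N g y d e : ℕ} (hN : 0 < N)
    (hg : g.Coprime N) (hy : y.Coprime N)
    (hinj : Set.InjOn (powMulPowMod g y N) (range d ×ˢ range e : Finset _))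
    (hcard : d * e = Nat.totient N) :
    (range d ×ˢ range e).image (powMulPowMod g y N) =
      (range N).filter (fun t => Nat.Coprime t N) := by
  refine eq_of_subset_of_card_le ?_ ?_
  · intro x hx
    obtain ⟨⟨s, k⟩, -, rfl⟩ := mem_image.mp hx
    rw [mem_filter, mem_range, powMulPowMod, Nat.Coprime, (Nat.mod_modEq _ N).gcd_eq]
    exact ⟨Nat.mod_lt _ hN, Nat.Coprime.mul_left (hg.pow_left s) (hy.pow_left k)⟩
  · rw [card_image_of_injOn hinj, card_product, card_range, card_range, hcard,
      Nat.totient_eq_card_coprime]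
    simp only [Nat.coprime_comm, le_refl]

theorem GC0_union_GC1 (g y N d e : ℕ) :
    GC0 g y N d e ∪ GC1 g y N d e =
      (range (2 * d) ×ˢ range e).image (powMulPowMod g y N) := by
  ext x
  simp only [GC0, GC1, powMulPowMod, mem_union, mem_image, mem_product, mem_range, Prod.exists]
  constructor
  · rintro (⟨t, k, ⟨ht, hk⟩, rfl⟩ | ⟨-, ⟨t, k, ⟨ht, hk⟩, rfl⟩, rfl⟩)
    · exact ⟨2 * t, k, ⟨by omega, hk⟩, rfl⟩
    · exact ⟨2 * t + 1, k, ⟨by omega, hk⟩, by rw [Nat.mul_mod_mod, pow_succ']; ring_nf⟩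
  · rintro ⟨s, k, ⟨hs, hk⟩, rfl⟩
    obtain ⟨t, rfl | rfl⟩ := Nat.even_or_odd' s
    · exact Or.inl ⟨t, k, ⟨by omega, hk⟩, rfl⟩
    · refine Or.inr ⟨_, ⟨t, k, ⟨by omega, hk⟩, rfl⟩, ?_⟩
      rw [Nat.mul_mod_mod, pow_succ']
      ring_nf

theorem disjoint_GC0_GC1 {g y N d e : ℕ}
    (hinj : Set.InjOn (powMulPowMod g y N) (range (2 * d) ×ˢ range e : Finset _)) :
    Disjoint (GC0 g y N d e) (GC1 g y N d e) := by
  rw [disjoint_left]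
  intro x hx0 hx1
  simp only [GC0, GC1, mem_image, mem_product, mem_range, Prod.exists] at hx0 hx1
  obtain ⟨t, k, ⟨ht, hk⟩, rfl⟩ := hx0
  obtain ⟨-, ⟨t', k', ⟨ht', hk'⟩, rfl⟩, hx⟩ := hx1
  rw [Nat.mul_mod_mod, ← mul_assoc, ← pow_succ'] at hx
  change powMulPowMod g y N (2 * t' + 1, k') = powMulPowMod g y N (2 * t, k) at hx
  have hodd_eq_even := hinj (by simp only [mem_coe, mem_product, mem_range]; omega) (by
    simp only [mem_coe, mem_product, mem_range]; omega) hx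
  simp only [Prod.mk.injEq] at hodd_eq_even
  omega

theorem GC0_union_GC1_eq_filter_coprime_and_disjoint {N P Q g y A B : ℕ} (hN : 0 < N)
    (hP : P ∣ N) (hQ : Q ∣ N) (hA : orderOf (g : ZMod P) = A) (hB : orderOf (g : ZMod Q) = B)
    (hyP : (y : ZMod P) = g) (hyQ : (y : ZMod Q) = 1) (hg : g.Coprime N) (hy : y.Coprime N)
    (htot : Nat.totient N = A * B) (heven : Even (Nat.lcm A B)) :
    GC0 g y N (Nat.lcm A B / 2) (Nat.gcd A B) ∪ GC1 g y N (Nat.lcm A B / 2) (Nat.gcd A B) =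
        (range N).filter (fun t => Nat.Coprime t N) ∧
      Disjoint (GC0 g y N (Nat.lcm A B / 2) (Nat.gcd A B))
        (GC1 g y N (Nat.lcm A B / 2) (Nat.gcd A B)) := by
  have hinj := injOn_powMulPowMod hP hQ hyP hyQ
  rw [hA, hB, ← Nat.two_mul_div_two_of_even heven] at hinj
  refine ⟨?_, disjoint_GC0_GC1 hinj⟩
  rw [GC0_union_GC1]
  refine image_powMulPowMod_eq_filter_coprime hN hg hy hinj ?_
  rw [Nat.two_mul_div_two_of_even heven, mul_comm, Nat.gcd_mul_lcm, htot]

theorem coprime_of_orderOf_ne_zero {a n : ℕ} (h : orderOf (a : ZMod n) ≠ 0) : a.Coprime n :=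
  (ZMod.isUnit_iff_coprime a n).mp (orderOf_pos_iff.mp (Nat.pos_of_ne_zero h)).isUnit

theorem GC0_union_GC1_eq_filter_coprime_and_disjoint_of_dvd {P Q N g y A B : ℕ}
    (hA : orderOf (g : ZMod P) = A) (hB : orderOf (g : ZMod Q) = B) (hA0 : A ≠ 0) (hB0 : B ≠ 0)
    (hg : Odd g) (hyP : y ≡ g [MOD 2 * P]) (hyQ : y ≡ 1 [MOD 2 * Q])
    (hN : 0 < N) (hPQN : P * Q ∣ N) (hN2 : N ∣ 2 * (P * Q))
    (htot : Nat.totient N = A * B) (heven : Even (Nat.lcm A B)) :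
    GC0 g y N (Nat.lcm A B / 2) (Nat.gcd A B) ∪ GC1 g y N (Nat.lcm A B / 2) (Nat.gcd A B) =
        (range N).filter (fun t => Nat.Coprime t N) ∧
      Disjoint (GC0 g y N (Nat.lcm A B / 2) (Nat.gcd A B))
        (GC1 g y N (Nat.lcm A B / 2) (Nat.gcd A B)) := by
  have hgP : g.Coprime P := coprime_of_orderOf_ne_zero (hA ▸ hA0)
  have hgQ : g.Coprime Q := coprime_of_orderOf_ne_zero (hB ▸ hB0)
  have hg2PQ : g.Coprime (2 * (P * Q)) := hg.coprime_two_right.mul_right (hgP.mul_right hgQ)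
  have hy2PQ : y.Coprime (2 * (P * Q)) := by
    have hy2P : y.Coprime (2 * P) := by
      rw [Nat.Coprime, hyP.gcd_eq]
      exact hg.coprime_two_right.mul_right hgP
    have hy2Q : y.Coprime (2 * Q) := by rw [Nat.Coprime, hyQ.gcd_eq, Nat.gcd_one_left]
    rw [← mul_assoc]
    exact hy2P.mul_right (hy2Q.coprime_dvd_right (dvd_mul_left Q 2))
  exact GC0_union_GC1_eq_filter_coprime_and_disjoint hN ((dvd_mul_right P Q).trans hPQN)
    ((dvd_mul_left Q P).trans hPQN) hA hB
    ((ZMod.natCast_eq_natCast_iff _ _ _).mpr (hyP.of_dvd (dvd_mul_left P 2)))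
    (by exact_mod_cast (ZMod.natCast_eq_natCast_iff _ _ _).mpr (hyQ.of_dvd (dvd_mul_left Q 2)))
    (hg2PQ.coprime_dvd_right hN2) (hy2PQ.coprime_dvd_right hN2) htot heven

theorem statement18_general
    (p q m n g y : ℕ)
    (hp : p.Prime) (hq : q.Prime) (hpq : p ≠ q) (hpodd : Odd p) (hqodd : Odd q)
    (hgodd : Odd g)
    (hgp : ∀ i, 1 ≤ i → i ≤ m → orderOf (g : ZMod (p ^ i)) = Nat.totient (p ^ i))
    (hgq : ∀ j, 1 ≤ j → j ≤ n → orderOf (g : ZMod (q ^ j)) = Nat.totient (q ^ j))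
    (hyg : y ≡ g [MOD 2 * p ^ m]) (hy1 : y ≡ 1 [MOD 2 * q ^ n])
    : ∀ i j, 1 ≤ i → i ≤ m → 1 ≤ j → j ≤ n →
      (DPQ p q g y 0 i j ∪ DPQ p q g y 1 i j
          = (Finset.range (p ^ i * q ^ j)).filter (fun t => Nat.Coprime t (p ^ i * q ^ j)) ∧
        Disjoint (DPQ p q g y 0 i j) (DPQ p q g y 1 i j)) ∧
      (D2PQ p q g y 0 i j ∪ D2PQ p q g y 1 i j
          = (Finset.range (2 * (p ^ i * q ^ j))).filter
              (fun t => Nat.Coprime t (2 * (p ^ i * q ^ j))) ∧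
        Disjoint (D2PQ p q g y 0 i j) (D2PQ p q g y 1 i j)) := by
  intro i j hi him hj hjn
  have htotP := Nat.totient_prime_pow hp hi
  have htotQ := Nat.totient_prime_pow hq hj
  have htot : Nat.totient (p ^ i * q ^ j) = Nat.totient (p ^ i) * Nat.totient (q ^ j) :=
    Nat.totient_mul (Nat.Coprime.pow _ _ ((Nat.coprime_primes hp hq).mpr hpq))
  have htot2 :
      Nat.totient (2 * (p ^ i * q ^ j)) = Nat.totient (p ^ i) * Nat.totient (q ^ j) := by
    rw [Nat.totient_mul (Nat.coprime_two_left.mpr (hpodd.pow.mul hqodd.pow)), Nat.totient_two,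
      one_mul, htot]
  rw [htotP, htotQ] at htot htot2
  have heven : Even (Nat.lcm (p ^ (i - 1) * (p - 1)) (q ^ (j - 1) * (q - 1))) :=
    even_iff_two_dvd.mpr
      (((Nat.Odd.sub_odd hpodd odd_one).mul_left _).two_dvd.trans (Nat.dvd_lcm_left _ _))
  have partition (N : ℕ) (hN : 0 < N) (hPQN : p ^ i * q ^ j ∣ N)
      (hN2 : N ∣ 2 * (p ^ i * q ^ j))
      (htotN : Nat.totient N = p ^ (i - 1) * (p - 1) * (q ^ (j - 1) * (q - 1))) :=
    GC0_union_GC1_eq_filter_coprime_and_disjoint_of_dvd ((hgp i hi him).trans htotP)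
      ((hgq j hj hjn).trans htotQ) (htotP ▸ (Nat.totient_pos.mpr (pow_pos hp.pos i)).ne')
      (htotQ ▸ (Nat.totient_pos.mpr (pow_pos hq.pos j)).ne') hgodd
      (hyg.of_dvd (mul_dvd_mul_left 2 (pow_dvd_pow p him)))
      (hy1.of_dvd (mul_dvd_mul_left 2 (pow_dvd_pow q hjn))) hN hPQN hN2 htotN heven
  have hPQ : 0 < p ^ i * q ^ j := Nat.mul_pos (pow_pos hp.pos i) (pow_pos hq.pos j)
  -- `dij` and `eij` unfold to `Nat.lcm` and `Nat.gcd` of `p^(i-1)(p-1)` and `q^(j-1)(q-1)`.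
  exact ⟨partition _ hPQ dvd_rfl (dvd_mul_left _ _) htot,
    partition _ (by omega) (dvd_mul_left _ _) dvd_rfl htot2⟩

theorem statement18
    (p q m n g y : ℕ)
    (hp : p.Prime) (hq : q.Prime) (hpq : p ≠ q) (hpodd : Odd p) (hqodd : Odd q)
    (hm : 1 ≤ m) (hn : 1 ≤ n) (hgodd : Odd g)
    (hgp : ∀ i, 1 ≤ i → i ≤ m → orderOf (g : ZMod (p ^ i)) = Nat.totient (p ^ i))
    (hg2p : ∀ i, 1 ≤ i → i ≤ m → orderOf (g : ZMod (2 * p ^ i)) = Nat.totient (2 * p ^ i))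
    (hgq : ∀ j, 1 ≤ j → j ≤ n → orderOf (g : ZMod (q ^ j)) = Nat.totient (q ^ j))
    (hg2q : ∀ j, 1 ≤ j → j ≤ n → orderOf (g : ZMod (2 * q ^ j)) = Nat.totient (2 * q ^ j))
    (hylt : y < 2 * (p ^ m * q ^ n))
    (hyg : y ≡ g [MOD 2 * p ^ m]) (hy1 : y ≡ 1 [MOD 2 * q ^ n])
    : ∀ i j, 1 ≤ i → i ≤ m → 1 ≤ j → j ≤ n →
      (DPQ p q g y 0 i j ∪ DPQ p q g y 1 i j
          = (Finset.range (p ^ i * q ^ j)).filter (fun t => Nat.Coprime t (p ^ i * q ^ j)) ∧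
        Disjoint (DPQ p q g y 0 i j) (DPQ p q g y 1 i j)) ∧
      (D2PQ p q g y 0 i j ∪ D2PQ p q g y 1 i j
          = (Finset.range (2 * (p ^ i * q ^ j))).filter
              (fun t => Nat.Coprime t (2 * (p ^ i * q ^ j))) ∧
        Disjoint (D2PQ p q g y 0 i j) (D2PQ p q g y 1 i j)) :=
  statement18_general p q m n g y hp hq hpq hpodd hqodd hgodd hgp hgq hyg hy1

end
end
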